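/- arXiv:2604.09520 — 9 statements merged into one kernel-verified Lean document; each statement's English description precedes it below -/
import Mathlib

section
/- Let m ≤ n and let X_{a,b} for (a,b) ∈ [m]×[n] be Bernoulli random variables with success probability p, such that X_{a,b} is mutually independent from the family {X_{a',b'} : a ≠ a' and b ≠ b'}. Let X = Σ_{(a,b)} X_{a,b} and μ = E[X]. Then P(X ≤ μ/2) ≤ n·exp(−μ/(8n)). -/
/-!
Partition the grid `[m] × [n]` into the `n` cyclic diagonals `{(a, a + k) : a ∈ [m]}`,
`k ∈ ℤ/n`; this needs `m ≤ n`. Two distinct cells of a diagonal differ in both coordinates,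
so the `m` variables on a diagonal are independent and the Chernoff bound gives
`P(diagonal sum ≤ mp/2) ≤ exp(-mp/8) = exp(-μ/(8n))`. If the total is at most `μ/2`, some
diagonal sum is at most `μ/(2n) = mp/2`, and a union bound over the `n` diagonals concludes.
-/

open MeasureTheory ProbabilityTheory Finset Real

section Bernoulli

variable {Ω : Type*} [MeasurableSpace Ω] {P : Measure Ω} [IsProbabilityMeasure P]

lemma mgf_of_forall_eq_zero_or_one {Y : Ω → ℝ} (hY : Measurable Y)
    (h01 : ∀ ω, Y ω = 0 ∨ Y ω = 1) (t : ℝ) :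
    mgf Y P t = 1 + (exp t - 1) * P.real {ω | Y ω = 1} := by
  have hs : MeasurableSet {ω | Y ω = 1} := hY (measurableSet_singleton 1)
  have hexp : (fun ω => exp (t * Y ω)) =
      fun ω => 1 + (exp t - 1) * {ω | Y ω = 1}.indicator 1 ω := by
    funext ω
    rcases h01 ω with h | h <;> simp [h]
  rw [mgf, hexp,
    integral_add (integrable_const _) (((integrable_const 1).indicator hs).const_mul _),
    integral_const_mul, integral_indicator_one hs]
  simp

lemma mgf_le_exp_of_forall_eq_zero_or_one {Y : Ω → ℝ} (hY : Measurable Y)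
    (h01 : ∀ ω, Y ω = 0 ∨ Y ω = 1) (t : ℝ) :
    mgf Y P t ≤ exp ((exp t - 1) * P.real {ω | Y ω = 1}) := by
  rw [mgf_of_forall_eq_zero_or_one hY h01 t, add_comm]
  exact add_one_le_exp _

/-- The multiplicative Chernoff bound `P(S ≤ (1 - δ) E S) ≤ exp(-δ² E S / 2)` at `δ = 1/2`,
via the exponential moment at `t = -log 2`. -/
theorem measureReal_sum_le_half_le_exp {ι : Type*} [Fintype ι] {X : ι → Ω → ℝ}
    (hmeas : ∀ i, Measurable (X i)) (h01 : ∀ i ω, X i ω = 0 ∨ X i ω = 1)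
    {p : ℝ} (hp0 : 0 ≤ p) (hp : ∀ i, P.real {ω | X i ω = 1} = p)
    (hindep : iIndepFun X P) :
    P.real {ω | ∑ i, X i ω ≤ Fintype.card ι * p / 2} ≤ exp (-(Fintype.card ι * p) / 8) := by
  set N : ℝ := (Fintype.card ι : ℝ)
  set t : ℝ := -log 2
  have ht : t ≤ 0 := neg_nonpos.mpr (log_nonneg one_le_two)
  have hexp_t : exp t = 1 / 2 := by simp [t, exp_neg, exp_log]
  have hSnn : ∀ ω, 0 ≤ ∑ i, X i ω := fun ω =>
    sum_nonneg fun i _ => by rcases h01 i ω with h | h <;> simp [h]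
  have hint : Integrable (fun ω => exp (t * (∑ i, X i) ω)) P := by
    refine Integrable.of_bound (by fun_prop) 1 (ae_of_all _ fun ω => ?_)
    rw [norm_of_nonneg (exp_pos _).le, exp_le_one_iff, Finset.sum_apply]
    exact mul_nonpos_of_nonpos_of_nonneg ht (hSnn ω)
  have hset : {ω | ∑ i, X i ω ≤ N * p / 2} = {ω | (∑ i, X i) ω ≤ N * p / 2} := by
    simp only [Finset.sum_apply]
  calc P.real {ω | ∑ i, X i ω ≤ N * p / 2}
      ≤ exp (-t * (N * p / 2)) * mgf (∑ i, X i) P t := by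
        rw [hset]; exact measure_le_le_exp_mul_mgf _ ht hint
    _ = exp (-t * (N * p / 2)) * ∏ i, mgf (X i) P t := by rw [hindep.mgf_sum hmeas]
    _ ≤ exp (-t * (N * p / 2)) * ∏ _i : ι, exp ((exp t - 1) * p) := by
        gcongr with i
        · exact fun i _ => mgf_nonneg
        · exact hp i ▸ mgf_le_exp_of_forall_eq_zero_or_one (hmeas i) (h01 i) t
    _ = exp (-t * (N * p / 2) + N * ((exp t - 1) * p)) := by
        rw [prod_const, card_univ, ← exp_nat_mul, ← exp_add]
    _ ≤ exp (-(N * p) / 8) := by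
        have hNp : 0 ≤ N * p := mul_nonneg (Nat.cast_nonneg _) hp0
        rw [exp_le_exp, hexp_t]
        nlinarith [log_two_lt_d9]

end Bernoulli

/-- Pigeonhole and union bound: if a sum of `K` terms is at most `c`, one term is at most
`c / K`. -/
lemma measureReal_sum_le_le_sum {Ω κ : Type*} [MeasurableSpace Ω] (P : Measure Ω)
    [IsFiniteMeasure P] [Fintype κ] [Nonempty κ] (T : κ → Ω → ℝ) (c : ℝ) :
    P.real {ω | ∑ k, T k ω ≤ c} ≤ ∑ k, P.real {ω | T k ω ≤ c / Fintype.card κ} := by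
  refine (measureReal_mono fun ω hω => ?_).trans
    (measureReal_iUnion_fintype_le fun k => {ω | T k ω ≤ c / Fintype.card κ})
  by_contra h
  simp only [Set.mem_iUnion, Set.mem_ofPred_eq, not_exists, not_le] at h hω
  have hlt := sum_lt_sum_of_nonempty univ_nonempty fun k (_ : k ∈ univ) => h k
  rw [sum_const, card_univ, nsmul_eq_mul, mul_div_cancel₀ _ (by positivity)] at hlt
  linarith

section GridDiagonal

variable {m n : ℕ} (hmn : m ≤ n)

def gridDiagonal (k : Fin n) : Finset (Fin m × Fin n) :=
  univ.map ⟨fun a => (a, Fin.castLE hmn a + k), fun _ _ h => congrArg Prod.fst h⟩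

lemma card_gridDiagonal (k : Fin n) : #(gridDiagonal hmn k) = m := by
  simp [gridDiagonal]

lemma gridDiagonal_pairwise (k : Fin n) :
    ∀ i ∈ gridDiagonal hmn k, ∀ j ∈ gridDiagonal hmn k, i ≠ j → i.1 ≠ j.1 ∧ i.2 ≠ j.2 := by
  simp only [gridDiagonal, mem_map, mem_univ, true_and]
  rintro _ ⟨a, rfl⟩ _ ⟨b, rfl⟩ hij
  have hab : a ≠ b := by rintro rfl; exact hij rfl
  exact ⟨hab, fun h => hab (Fin.castLE_injective hmn (add_right_cancel h))⟩

lemma sum_eq_sum_gridDiagonal [NeZero n] {M : Type*} [AddCommMonoid M]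
    (f : Fin m → Fin n → M) :
    ∑ a, ∑ b, f a b = ∑ k, ∑ i ∈ gridDiagonal hmn k, f i.1 i.2 := by
  simp only [gridDiagonal, sum_map]
  refine (sum_congr rfl fun a _ => ?_).trans sum_comm
  exact (Equiv.sum_comp (Equiv.addLeft (Fin.castLE hmn a)) (f a)).symm

end GridDiagonal

/-- Lemma 2.4 (grid concentration): Bernoulli random variables indexed by `[m] × [n]`,
each with success probability `p`, such that any subfamily whose members pairwise differ
in both coordinates is mutually independent.  Then `P(X ≤ μ/2) ≤ n · exp(−μ/(8n))`. -/
theorem stmt_0 {Ω : Type*} [MeasurableSpace Ω] (P : Measure Ω) [IsProbabilityMeasure P]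
    (m n : ℕ) (hn : 1 ≤ n) (hmn : m ≤ n) (p : ℝ)
    (X : Fin m → Fin n → Ω → ℝ)
    (hmeas : ∀ a b, Measurable (X a b))
    (hind : ∀ a b ω, X a b ω = 0 ∨ X a b ω = 1)
    (hp : ∀ a b, P {ω | X a b ω = 1} = ENNReal.ofReal p)
    (hindep : ∀ S : Finset (Fin m × Fin n),
      (∀ i ∈ S, ∀ j ∈ S, i ≠ j → i.1 ≠ j.1 ∧ i.2 ≠ j.2) →
      iIndepFun (fun i : S => X i.1.1 i.1.2) P)
    (μ : ℝ) (hμ : μ = m * n * p) :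
    (P {ω | ∑ a : Fin m, ∑ b : Fin n, X a b ω ≤ μ / 2}).toReal
      ≤ n * Real.exp (-μ / (8 * n)) := by
  have : NeZero n := ⟨by omega⟩
  have hn0 : (0 : ℝ) < n := by exact_mod_cast hn
  change P.real _ ≤ _
  rcases lt_or_ge p 0 with hp0 | hp0
  · have hμ0 : μ ≤ 0 := hμ ▸ mul_nonpos_of_nonneg_of_nonpos (by positivity) hp0.le
    calc P.real _ ≤ n * 1 := measureReal_le_one.trans (by rw [mul_one]; exact_mod_cast hn)
      _ ≤ n * exp (-μ / (8 * n)) := by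
        gcongr
        exact one_le_exp (div_nonneg (neg_nonneg.mpr hμ0) (by positivity))
  have hdiag (k : Fin n) :
      P.real {ω | ∑ i ∈ gridDiagonal hmn k, X i.1 i.2 ω ≤ μ / 2 / n} ≤ exp (-μ / (8 * n)) := by
    have h := measureReal_sum_le_half_le_exp (fun i => hmeas _ _) (fun i => hind _ _) hp0
      (fun i => by simp [measureReal_def, hp, hp0])
      (hindep _ (gridDiagonal_pairwise hmn k))
    rw [Fintype.card_coe, card_gridDiagonal] at h
    have hmean : μ / 2 / n = m * p / 2 := by rw [hμ]; field_simp
    have hrate : -μ / (8 * n) = -(m * p) / 8 := by rw [hμ]; field_simp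
    rw [hmean, hrate]
    convert h using 5 with ω
    exact (sum_coe_sort _ fun i : Fin m × Fin n => X i.1 i.2 ω).symm
  simp_rw [sum_eq_sum_gridDiagonal hmn]
  calc _ ≤ ∑ k : Fin n,
        P.real {ω | ∑ i ∈ gridDiagonal hmn k, X i.1 i.2 ω ≤ μ / 2 / n} := by
        simpa only [Fintype.card_fin] using measureReal_sum_le_le_sum P
          (fun k ω => ∑ i ∈ gridDiagonal hmn k, X i.1 i.2 ω) (μ / 2)
    _ ≤ ∑ _k : Fin n, exp (-μ / (8 * n)) := sum_le_sum fun k _ => hdiag k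
    _ = n * exp (-μ / (8 * n)) := by simp
end

section
/- Let G be a graph on n vertices and φ an all-pair unit-demand multicommodity flow on G (for every pair of distinct vertices x,y, the total weight of x–y paths is 1). Then the edge-expansion satisfies h(G) ≥ n/(2·cng(φ)), where cng(φ) is the maximum over edges e of the total flow through e. -/
/-!
Every one of the `|U| · |Uᶜ|` units of demand between `U` and its complement is routed
along paths that leave `U`, hence cross an edge of the boundary `∂U`. Summing the flow over
the boundary edges therefore counts all of it, so `|U| · |Uᶜ| ≤ |∂U| · cng(φ)`; as
`|Uᶜ| ≥ n / 2`, this gives `|∂U| / |U| ≥ n / (2 · cng(φ))`.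
-/

open Finset

namespace SimpleGraph

variable {V : Type*} [Fintype V] [DecidableEq V] {G : SimpleGraph V} [DecidableRel G.Adj]

/-- The edge boundary `∂(U)`, each edge recorded as the pair oriented out of `U`. -/
def boundaryPairs (G : SimpleGraph V) [DecidableRel G.Adj] (U : Finset V) : Finset (V × V) :=
  univ.filter fun q : V × V => G.Adj q.1 q.2 ∧ q.1 ∈ U ∧ q.2 ∉ U

def congestion (φ : ∀ x y : V, G.Path x y → ℝ) (e : Sym2 V) : ℝ :=
  ∑ x : V, ∑ y : V, ∑ p : G.Path x y, if e ∈ (p : G.Walk x y).edges then φ x y p else 0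

theorem exists_mem_boundaryPairs_mem_edges {U : Finset V} {x y : V} (p : G.Walk x y)
    (hx : x ∈ U) (hy : y ∉ U) : ∃ q ∈ G.boundaryPairs U, s(q.1, q.2) ∈ p.edges := by
  obtain ⟨d, hd, hdU, hdU'⟩ := p.exists_boundary_dart U hx hy
  refine ⟨(d.fst, d.snd), ?_, ?_⟩
  · exact mem_filter.2 ⟨mem_univ _, d.adj, hdU, hdU'⟩
  · rw [p.edges_eq_map_darts]
    exact List.mem_map_of_mem hd

variable {φ : ∀ x y : V, G.Path x y → ℝ}

theorem sum_ite_mem_edges_le_congestion (hφ : ∀ x y p, 0 ≤ φ x y p) (X Y : Finset V)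
    (e : Sym2 V) :
    ∑ x ∈ X, ∑ y ∈ Y, ∑ p : G.Path x y,
      (if e ∈ (p : G.Walk x y).edges then φ x y p else 0) ≤ congestion φ e := by
  have hterm : ∀ x y (p : G.Path x y),
      0 ≤ if e ∈ (p : G.Walk x y).edges then φ x y p else 0 := fun x y p => by
    split_ifs
    exacts [hφ x y p, le_rfl]
  refine (sum_le_sum fun x _ => sum_le_sum_of_subset_of_nonneg (subset_univ Y)
    fun y _ _ => sum_nonneg fun p _ => hterm x y p).trans ?_
  exact sum_le_sum_of_subset_of_nonneg (subset_univ X)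
    fun x _ _ => sum_nonneg fun y _ => sum_nonneg fun p _ => hterm x y p

theorem congestion_nonneg (hφ : ∀ x y p, 0 ≤ φ x y p) (e : Sym2 V) :
    0 ≤ congestion φ e := by
  simpa using sum_ite_mem_edges_le_congestion hφ ∅ ∅ e

theorem sum_flow_le_sum_congestion (hφ : ∀ x y p, 0 ≤ φ x y p) (X Y : Finset V)
    (S : Finset (Sym2 V))
    (hS : ∀ x ∈ X, ∀ y ∈ Y, ∀ p : G.Path x y, ∃ e ∈ S, e ∈ (p : G.Walk x y).edges) :
    ∑ x ∈ X, ∑ y ∈ Y, ∑ p : G.Path x y, φ x y p ≤ ∑ e ∈ S, congestion φ e := by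
  have hpath : ∀ x ∈ X, ∀ y ∈ Y, ∀ p : G.Path x y,
      φ x y p ≤ ∑ e ∈ S, if e ∈ (p : G.Walk x y).edges then φ x y p else 0 := by
    intro x hx y hy p
    obtain ⟨e, heS, hep⟩ := hS x hx y hy p
    calc φ x y p = if e ∈ (p : G.Walk x y).edges then φ x y p else 0 := (if_pos hep).symm
      _ ≤ _ := single_le_sum (f := fun e => if e ∈ (p : G.Walk x y).edges then φ x y p else 0)
          (fun e _ => by split_ifs; exacts [hφ x y p, le_rfl]) heS
  calc ∑ x ∈ X, ∑ y ∈ Y, ∑ p : G.Path x y, φ x y p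
      ≤ ∑ x ∈ X, ∑ y ∈ Y, ∑ p : G.Path x y,
          ∑ e ∈ S, if e ∈ (p : G.Walk x y).edges then φ x y p else 0 :=
        sum_le_sum fun x hx => sum_le_sum fun y hy => sum_le_sum fun p _ => hpath x hx y hy p
    _ = ∑ e ∈ S, ∑ x ∈ X, ∑ y ∈ Y, ∑ p : G.Path x y,
          if e ∈ (p : G.Walk x y).edges then φ x y p else 0 := by
        simp_rw [sum_comm (s := (univ : Finset (G.Path _ _))), sum_comm (s := Y),
          sum_comm (s := X)]
    _ ≤ ∑ e ∈ S, congestion φ e :=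
        sum_le_sum fun e _ => sum_ite_mem_edges_le_congestion hφ X Y e

theorem sum_flow_eq_card_mul_card
    (hflow : ∀ x y : V, x ≠ y → ∑ p : G.Path x y, φ x y p = 1) {X Y : Finset V}
    (hXY : Disjoint X Y) :
    ∑ x ∈ X, ∑ y ∈ Y, ∑ p : G.Path x y, φ x y p = (X.card : ℝ) * Y.card := by
  have hone : ∀ x ∈ X, ∀ y ∈ Y, ∑ p : G.Path x y, φ x y p = 1 := fun x hx y hy =>
    hflow x y fun hxy => Finset.disjoint_left.1 hXY hx (hxy ▸ hy)
  simp [sum_congr rfl fun x hx => sum_congr rfl (hone x hx)]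

theorem card_mul_card_compl_le_card_boundaryPairs_mul (hφ : ∀ x y p, 0 ≤ φ x y p)
    (hflow : ∀ x y : V, x ≠ y → ∑ p : G.Path x y, φ x y p = 1) {C : ℝ}
    (hC : ∀ e ∈ G.edgeFinset, congestion φ e ≤ C) (U : Finset V) :
    (U.card : ℝ) * Uᶜ.card ≤ (G.boundaryPairs U).card * C := by
  set D := G.boundaryPairs U
  have hcross : ∀ x ∈ U, ∀ y ∈ Uᶜ, ∀ p : G.Path x y,
      ∃ e ∈ D.image (fun q => s(q.1, q.2)), e ∈ (p : G.Walk x y).edges := by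
    intro x hx y hy p
    obtain ⟨q, hq, hqp⟩ :=
      exists_mem_boundaryPairs_mem_edges (p : G.Walk x y) hx (mem_compl.1 hy)
    exact ⟨_, mem_image_of_mem _ hq, hqp⟩
  calc (U.card : ℝ) * Uᶜ.card = ∑ x ∈ U, ∑ y ∈ Uᶜ, ∑ p : G.Path x y, φ x y p :=
        (sum_flow_eq_card_mul_card hflow disjoint_compl_right).symm
    _ ≤ ∑ e ∈ D.image (fun q => s(q.1, q.2)), congestion φ e :=
        sum_flow_le_sum_congestion hφ U Uᶜ _ hcross
    _ ≤ ∑ q ∈ D, congestion φ s(q.1, q.2) :=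
        sum_image_le_of_nonneg fun e _ => congestion_nonneg hφ e
    _ ≤ ∑ _q ∈ D, C :=
        sum_le_sum fun q hq => hC _ (mem_edgeFinset.2 (mem_filter.1 hq).2.1)
    _ = D.card * C := by rw [sum_const, nsmul_eq_mul]

end SimpleGraph

/-- Theorem 2.5: if `φ` is an all-pair unit-demand multicommodity flow on a graph `G`
on `n` vertices whose edge congestions are all at most `C`, then the edge-expansion
of `G` is at least `n / (2C)`. -/
theorem stmt_1 {V : Type*} [Fintype V] [DecidableEq V] (G : SimpleGraph V) [DecidableRel G.Adj]
    (φ : ∀ x y : V, G.Path x y → ℝ)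
    (hnonneg : ∀ x y p, 0 ≤ φ x y p)
    (hflow : ∀ x y : V, x ≠ y → ∑ p : G.Path x y, φ x y p = 1)
    (C : ℝ)
    (hC : ∀ e : Sym2 V, e ∈ G.edgeFinset →
      ∑ x : V, ∑ y : V, ∑ p : G.Path x y,
        (if e ∈ (p : G.Walk x y).edges then φ x y p else 0) ≤ C)
    (U : Finset V) (hU : U.Nonempty) (hU2 : 2 * U.card ≤ Fintype.card V) :
    (Fintype.card V : ℝ) / (2 * C) ≤
      ((univ.filter (fun q : V × V => G.Adj q.1 q.2 ∧ q.1 ∈ U ∧ q.2 ∉ U)).card : ℝ)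
        / U.card := by
  have hcut := G.card_mul_card_compl_le_card_boundaryPairs_mul hnonneg hflow hC U
  have hhalf : (Fintype.card V : ℝ) ≤ 2 * Uᶜ.card := by
    rw [card_compl, Nat.cast_sub (card_le_univ U)]
    have : (2 * U.card : ℝ) ≤ Fintype.card V := by exact_mod_cast hU2
    linarith
  have hUpos : (0 : ℝ) < U.card := by exact_mod_cast hU.card_pos
  rcases le_or_gt C 0 with hC0 | hC0
  · exact (div_nonpos_of_nonneg_of_nonpos (by positivity) (by linarith)).trans (by positivity)
  · rw [div_le_div_iff₀ (by positivity) hUpos]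
    change _ ≤ ((G.boundaryPairs U).card : ℝ) * _
    linarith [mul_le_mul_of_nonneg_left hhalf hUpos.le]
end

section
/- Let G be a graph on n vertices and φ an all-pair unit-demand multicommodity flow with cng(φ) ≤ C for some C > 6 log n. Then for every pair x,y of vertices one can select a single path P_{x,y} between x and y such that every edge of G is contained in at most 2C of the selected paths. -/
open Finset

namespace Stmt2Aux

variable {V : Type*} [Fintype V] [DecidableEq V]

/-- a nil path transported along an equality of endpoints -/
def nilPath (G : SimpleGraph V) {x y : V} (h : x = y) : G.Path x y :=
  match h with | rfl => SimpleGraph.Path.nil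

/-- select a single path for every ordered pair from a choice `ω` on increasing pairs. -/
def choose (G : SimpleGraph V) (ι : V ≃ Fin (Fintype.card V))
    (ω : ∀ q : {q : V × V // ι q.1 < ι q.2}, G.Path q.1.1 q.1.2) (x y : V) : G.Path x y :=
  if h : ι x < ι y then ω ⟨(x, y), h⟩
  else if h' : ι y < ι x then (ω ⟨(y, x), h'⟩).reverse
  else nilPath G (ι.injective (le_antisymm (not_lt.1 h') (not_lt.1 h)))

lemma choose_rev (G : SimpleGraph V) (ι : V ≃ Fin (Fintype.card V))
    (ω : ∀ q : {q : V × V // ι q.1 < ι q.2}, G.Path q.1.1 q.1.2) (x y : V) :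
    choose G ι ω y x = (choose G ι ω x y).reverse := by
  rcases lt_trichotomy (ι x) (ι y) with h | h | h
  · rw [choose, choose, dif_neg (asymm h), dif_pos h, dif_pos h]
  · have hxy : x = y := ι.injective h
    subst hxy
    rw [choose, dif_neg (lt_irrefl _), dif_neg (lt_irrefl _)]
    exact Subtype.ext (SimpleGraph.Walk.reverse_nil).symm
  · rw [choose, choose, dif_pos h, dif_neg (asymm h), dif_pos h]
    exact Subtype.ext (SimpleGraph.Walk.reverse_reverse _).symm


set_option maxHeartbeats 1600000 in
lemma exists_good (G : SimpleGraph V) [DecidableRel G.Adj]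
    (ι : V ≃ Fin (Fintype.card V))
    (φ : ∀ x y : V, G.Path x y → ℝ)
    (hnonneg : ∀ x y p, 0 ≤ φ x y p)
    (hflow : ∀ x y : V, x ≠ y → ∑ p : G.Path x y, φ x y p = 1)
    (C : ℝ) (hC6 : 6 * Real.log (Fintype.card V) < C)
    (hC : ∀ e : Sym2 V, e ∈ G.edgeFinset →
      ∑ x : V, ∑ y : V, ∑ p : G.Path x y,
        (if e ∈ (p : G.Walk x y).edges then φ x y p else 0) ≤ C) :
    ∃ ω : ∀ q : {q : V × V // ι q.1 < ι q.2}, G.Path q.1.1 q.1.2,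
      ∀ e ∈ G.edgeFinset,
        ((univ.filter (fun q : {q : V × V // ι q.1 < ι q.2} =>
            e ∈ (ω q : G.Walk q.1.1 q.1.2).edges)).card : ℝ) ≤ 2 * C := by
  classical
  have hC0 : 0 < C := lt_of_le_of_lt (by positivity) hC6
  have hqne : ∀ q : {q : V × V // ι q.1 < ι q.2}, q.1.1 ≠ q.1.2 := by
    intro q h
    have hq := q.2
    rw [h] at hq
    exact lt_irrefl _ hq
  -- the weight of a selection
  set w : (∀ q : {q : V × V // ι q.1 < ι q.2}, G.Path q.1.1 q.1.2) → ℝ :=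
    fun ω => ∏ q, φ q.1.1 q.1.2 (ω q) with hw
  have hw0 : ∀ ω, 0 ≤ w ω := fun ω => Finset.prod_nonneg fun q _ => hnonneg _ _ _
  have hwsum : ∑ ω, w ω = 1 := by
    have h1 := Finset.prod_univ_sum
      (fun q : {q : V × V // ι q.1 < ι q.2} => (univ : Finset (G.Path q.1.1 q.1.2)))
      (fun q p => φ q.1.1 q.1.2 p)
    rw [Fintype.piFinset_univ] at h1
    rw [hw, ← h1]
    exact Finset.prod_eq_one fun q _ => hflow _ _ (hqne q)
  -- per-edge counters
  set X : Sym2 V → (∀ q : {q : V × V // ι q.1 < ι q.2}, G.Path q.1.1 q.1.2) → ℕ :=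
    fun e ω => (univ.filter (fun q : {q : V × V // ι q.1 < ι q.2} =>
      e ∈ (ω q : G.Walk q.1.1 q.1.2).edges)).card with hX
  -- per-edge bad-set bound
  have hbad : ∀ e ∈ G.edgeFinset,
      ∑ ω ∈ univ.filter (fun ω => 2 * C < (X e ω : ℝ)), w ω
        ≤ Real.exp C / Real.exp (2 * C * Real.log 2) := by
    intro e he
    set μ : {q : V × V // ι q.1 < ι q.2} → ℝ :=
      fun q => ∑ p : G.Path q.1.1 q.1.2,
        if e ∈ (p : G.Walk q.1.1 q.1.2).edges then φ q.1.1 q.1.2 p else 0 with hμ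
    have hμ0 : ∀ q, 0 ≤ μ q := fun q => Finset.sum_nonneg fun p _ => by
      split; exacts [hnonneg _ _ _, le_rfl]
    have hμC : ∑ q, μ q ≤ C := by
      have h2 : (∑ q : V × V, ∑ p : G.Path q.1 q.2,
          if e ∈ (p : G.Walk q.1 q.2).edges then φ q.1 q.2 p else 0) ≤ C := by
        rw [Fintype.sum_prod_type]; exact hC e he
      have h3 : ∑ q, μ q = ∑ q ∈ univ.filter (fun q : V × V => ι q.1 < ι q.2),
          ∑ p : G.Path q.1 q.2,
            (if e ∈ (p : G.Walk q.1 q.2).edges then φ q.1 q.2 p else 0) :=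
        (Finset.sum_subtype (p := fun q : V × V => ι q.1 < ι q.2)
          (univ.filter (fun q : V × V => ι q.1 < ι q.2)) (fun q => by simp)
          (fun q : V × V => ∑ p : G.Path q.1 q.2,
            if e ∈ (p : G.Walk q.1 q.2).edges then φ q.1 q.2 p else 0)).symm
      rw [h3]
      refine le_trans (Finset.sum_le_sum_of_subset_of_nonneg (Finset.filter_subset _ _)
        (fun q _ _ => Finset.sum_nonneg fun p _ => by split; exacts [hnonneg _ _ _, le_rfl])) h2
    set g : (q : {q : V × V // ι q.1 < ι q.2}) → G.Path q.1.1 q.1.2 → ℝ :=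
      fun q p => if e ∈ (p : G.Walk q.1.1 q.1.2).edges then 2 else 1 with hg
    have hmgf : ∑ ω, w ω * ∏ q, g q (ω q) ≤ Real.exp C := by
      have h1 := Finset.prod_univ_sum
        (fun q : {q : V × V // ι q.1 < ι q.2} => (univ : Finset (G.Path q.1.1 q.1.2)))
        (fun q p => φ q.1.1 q.1.2 p * g q p)
      rw [Fintype.piFinset_univ] at h1
      have h2 : ∑ ω, w ω * ∏ q, g q (ω q)
          = ∏ q : {q : V × V // ι q.1 < ι q.2}, ∑ p, φ q.1.1 q.1.2 p * g q p := by
        rw [h1]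
        exact Finset.sum_congr rfl fun ω _ => (Finset.prod_mul_distrib).symm
      rw [h2]
      have step : ∀ q : {q : V × V // ι q.1 < ι q.2},
          ∑ p, φ q.1.1 q.1.2 p * g q p = 1 + μ q := by
        intro q
        have hpt : ∀ p : G.Path q.1.1 q.1.2, φ q.1.1 q.1.2 p * g q p
            = φ q.1.1 q.1.2 p
              + (if e ∈ (p : G.Walk q.1.1 q.1.2).edges then φ q.1.1 q.1.2 p else 0) := by
          intro p
          simp only [hg]
          split <;> ring
        rw [Finset.sum_congr rfl fun p _ => hpt p, Finset.sum_add_distrib,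
          hflow _ _ (hqne q)]
      calc (∏ q : {q : V × V // ι q.1 < ι q.2}, ∑ p, φ q.1.1 q.1.2 p * g q p)
          = ∏ q, (1 + μ q) := Finset.prod_congr rfl fun q _ => step q
        _ ≤ ∏ q, Real.exp (μ q) := by
            refine Finset.prod_le_prod (fun q _ => by linarith [hμ0 q]) (fun q _ => ?_)
            have := Real.add_one_le_exp (μ q)
            linarith
        _ = Real.exp (∑ q, μ q) := (Real.exp_sum _ _).symm
        _ ≤ Real.exp C := Real.exp_le_exp.2 hμC
    have hprodg : ∀ ω, ∏ q, g q (ω q) = 2 ^ X e ω := by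
      intro ω
      simp only [hg, hX]
      rw [Finset.prod_ite (fun _ => (2:ℝ)) (fun _ => (1:ℝ)), Finset.prod_const,
        Finset.prod_const_one, mul_one]
    have hkey : Real.exp (2 * C * Real.log 2)
        * ∑ ω ∈ univ.filter (fun ω => 2 * C < (X e ω : ℝ)), w ω ≤ Real.exp C := by
      rw [Finset.mul_sum]
      calc (∑ ω ∈ univ.filter (fun ω => 2 * C < (X e ω : ℝ)),
            Real.exp (2 * C * Real.log 2) * w ω)
          ≤ ∑ ω ∈ univ.filter (fun ω => 2 * C < (X e ω : ℝ)), w ω * ∏ q, g q (ω q) := by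
            refine Finset.sum_le_sum fun ω hω => ?_
            rw [Finset.mem_filter] at hω
            rw [hprodg ω, mul_comm]
            refine mul_le_mul_of_nonneg_left ?_ (hw0 ω)
            have h4 : Real.exp ((X e ω : ℝ) * Real.log 2) = ((2:ℝ)) ^ (X e ω) := by
              rw [Real.exp_nat_mul, Real.exp_log (by norm_num : (0:ℝ) < 2)]
            rw [← h4]
            exact Real.exp_le_exp.2
              (mul_le_mul_of_nonneg_right hω.2.le (Real.log_nonneg one_le_two))
          _ ≤ ∑ ω, w ω * ∏ q, g q (ω q) := by
            refine Finset.sum_le_sum_of_subset_of_nonneg (Finset.filter_subset _ _)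
              (fun ω _ _ => mul_nonneg (hw0 ω) (by
                rw [hprodg ω]; positivity))
          _ ≤ Real.exp C := hmgf
    have hexp_pos : (0:ℝ) < Real.exp (2 * C * Real.log 2) := Real.exp_pos _
    rw [le_div_iff₀ hexp_pos, mul_comm]
    exact hkey
  set δ := Real.exp C / Real.exp (2 * C * Real.log 2) with hδ
  have hδ0 : 0 ≤ δ := by positivity
  have hcard : (G.edgeFinset.card : ℝ) * δ < 1 := by
    by_cases hm : G.edgeFinset.card = 0
    · rw [hm]; norm_num
    · have hm1 : 0 < G.edgeFinset.card := Nat.pos_of_ne_zero hm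
      obtain ⟨e, he⟩ := Finset.card_pos.1 hm1
      have hV2 : 2 ≤ Fintype.card V := by
        rw [SimpleGraph.mem_edgeFinset] at he
        induction e using Sym2.ind with
        | _ a b =>
          rw [SimpleGraph.mem_edgeSet] at he
          exact Fintype.one_lt_card_iff.2 ⟨a, b, he.ne⟩
      have hn1 : (1:ℝ) ≤ (Fintype.card V : ℝ) := by
        exact_mod_cast le_trans one_le_two hV2
      have hm2 : (G.edgeFinset.card : ℝ) ≤ (Fintype.card V : ℝ) ^ 2 := by
        have h1 : G.edgeFinset.card ≤ (Fintype.card V).choose 2 :=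
          SimpleGraph.card_edgeFinset_le_card_choose_two
        have h2 : (Fintype.card V).choose 2 ≤ (Fintype.card V) ^ 2 := by
          rw [Nat.choose_two_right]
          calc Fintype.card V * (Fintype.card V - 1) / 2
              ≤ Fintype.card V * (Fintype.card V - 1) := Nat.div_le_self _ _
            _ ≤ Fintype.card V * Fintype.card V :=
                Nat.mul_le_mul_left _ (Nat.sub_le _ _)
            _ = Fintype.card V ^ 2 := (sq (Fintype.card V)).symm
        exact_mod_cast h1.trans h2
      have hn2 : ((Fintype.card V : ℝ)) ^ 2
          = Real.exp (2 * Real.log (Fintype.card V)) := by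
        rw [show (2:ℝ) * Real.log (Fintype.card V)
            = ((2:ℕ):ℝ) * Real.log (Fintype.card V) by norm_num,
          Real.exp_nat_mul, Real.exp_log (by linarith)]
      have hlog2 : (0.6931471803 : ℝ) < Real.log 2 := Real.log_two_gt_d9
      calc (G.edgeFinset.card : ℝ) * δ
          ≤ (Fintype.card V : ℝ) ^ 2 * δ := mul_le_mul_of_nonneg_right hm2 hδ0
        _ = Real.exp (2 * Real.log (Fintype.card V) + C - 2 * C * Real.log 2) := by
            rw [hn2, hδ, ← Real.exp_sub, ← Real.exp_add, ← add_sub_assoc]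
        _ < 1 := by
            apply Real.exp_lt_one_iff.2
            nlinarith [Real.log_natCast_nonneg (Fintype.card V)]
  set Bad := univ.filter (fun ω => ∃ e ∈ G.edgeFinset, 2 * C < (X e ω : ℝ)) with hBad
  have hBsum : ∑ ω ∈ Bad, w ω < 1 := by
    calc ∑ ω ∈ Bad, w ω
        ≤ ∑ ω ∈ Bad, w ω * ∑ e ∈ G.edgeFinset,
            (if 2 * C < (X e ω : ℝ) then (1:ℝ) else 0) := by
          refine Finset.sum_le_sum fun ω hω => ?_
          rw [hBad, Finset.mem_filter] at hω
          obtain ⟨-, e, he, hXe⟩ := hω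
          refine le_mul_of_one_le_right (hw0 ω) ?_
          calc (1:ℝ) = if 2 * C < (X e ω : ℝ) then (1:ℝ) else 0 := (if_pos hXe).symm
            _ ≤ ∑ e ∈ G.edgeFinset, (if 2 * C < (X e ω : ℝ) then (1:ℝ) else 0) :=
              Finset.single_le_sum (f := fun e => if 2 * C < (X e ω : ℝ) then (1:ℝ) else 0)
                (fun e _ => by by_cases h : 2 * C < (X e ω : ℝ) <;> simp [h]) he
      _ ≤ ∑ ω, w ω * ∑ e ∈ G.edgeFinset,
            (if 2 * C < (X e ω : ℝ) then (1:ℝ) else 0) :=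
          Finset.sum_le_sum_of_subset_of_nonneg (Finset.filter_subset _ _)
            (fun ω _ _ => mul_nonneg (hw0 ω)
              (Finset.sum_nonneg fun e _ => by split <;> norm_num))
      _ = ∑ e ∈ G.edgeFinset, ∑ ω, (if 2 * C < (X e ω : ℝ) then w ω else 0) := by
          simp_rw [Finset.mul_sum]
          rw [Finset.sum_comm]
          simp_rw [mul_ite, mul_one, mul_zero]
      _ = ∑ e ∈ G.edgeFinset, ∑ ω ∈ univ.filter (fun ω => 2 * C < (X e ω : ℝ)), w ω := by
          exact Finset.sum_congr rfl fun e _ => (Finset.sum_filter _ _).symm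
      _ ≤ ∑ _e ∈ G.edgeFinset, δ := Finset.sum_le_sum fun e he => hbad e he
      _ = (G.edgeFinset.card : ℝ) * δ := by rw [Finset.sum_const, nsmul_eq_mul]
      _ < 1 := hcard
  have hsd : 0 < ∑ ω ∈ univ \ Bad, w ω := by
    rw [Finset.sum_sdiff_eq_sub (Finset.subset_univ _), hwsum]
    linarith
  have hne2 : (univ \ Bad).Nonempty := by
    by_contra h
    rw [Finset.not_nonempty_iff_eq_empty] at h
    rw [h, Finset.sum_empty] at hsd
    exact lt_irrefl _ hsd
  obtain ⟨ω, hω⟩ := hne2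
  rw [Finset.mem_sdiff] at hω
  refine ⟨ω, fun e he => ?_⟩
  have h5 : ¬ (2 * C < (X e ω : ℝ)) := fun hlt =>
    hω.2 (Finset.mem_filter.2 ⟨Finset.mem_univ _, e, he, hlt⟩)
  exact not_lt.1 h5


end Stmt2Aux

/-- Lemma 2.6: given an A-flow `φ` with congestion at most `C > 6 log n`, one can select
a single path `P x y` between every pair of vertices (with `P y x` the reverse of `P x y`,
so that each unordered pair gets one path) such that every edge of `G` lies on at most `2C`
of the selected paths; counting ordered pairs, each edge lies in at most `2·(2C)` of them. -/


theorem stmt_2 {V : Type*} [Fintype V] [DecidableEq V] (G : SimpleGraph V) [DecidableRel G.Adj]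
    (φ : ∀ x y : V, G.Path x y → ℝ)
    (hnonneg : ∀ x y p, 0 ≤ φ x y p)
    (hflow : ∀ x y : V, x ≠ y → ∑ p : G.Path x y, φ x y p = 1)
    (C : ℝ) (hC6 : 6 * Real.log (Fintype.card V) < C)
    (hC : ∀ e : Sym2 V, e ∈ G.edgeFinset →
      ∑ x : V, ∑ y : V, ∑ p : G.Path x y,
        (if e ∈ (p : G.Walk x y).edges then φ x y p else 0) ≤ C) :
    ∃ P : ∀ x y : V, G.Path x y,
      (∀ x y : V, P y x = (P x y).reverse) ∧
      ∀ e ∈ G.edgeFinset,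
        ((univ.filter (fun q : V × V =>
            q.1 ≠ q.2 ∧ e ∈ ((P q.1 q.2 : G.Path q.1 q.2) : G.Walk q.1 q.2).edges)).card : ℝ)
          ≤ 2 * (2 * C) := by
  classical
  set ι := Fintype.equivFin V with hι
  obtain ⟨ω, hω⟩ := Stmt2Aux.exists_good G ι φ hnonneg hflow C hC6 hC
  refine ⟨Stmt2Aux.choose G ι ω, Stmt2Aux.choose_rev G ι ω, ?_⟩
  intro e he
  have hX := hω e he
  set S := univ.filter (fun q : {q : V × V // ι q.1 < ι q.2} =>
    e ∈ (ω q : G.Walk q.1.1 q.1.2).edges) with hS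
  set A := univ.filter (fun q : V × V =>
    q.1 ≠ q.2 ∧ e ∈ ((Stmt2Aux.choose G ι ω q.1 q.2 : G.Path q.1 q.2) : G.Walk q.1 q.2).edges) with hA
  have hsplit : (A.filter (fun q : V × V => ι q.1 < ι q.2)).card
      + (A.filter (fun q : V × V => ¬ ι q.1 < ι q.2)).card = A.card :=
    Finset.card_filter_add_card_filter_not _
  have hA1 : A.filter (fun q : V × V => ι q.1 < ι q.2)
      ⊆ S.image (fun s => s.val) := by
    intro q hq
    rw [Finset.mem_filter] at hq
    obtain ⟨hqA, hlt⟩ := hq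
    rw [hA, Finset.mem_filter] at hqA
    obtain ⟨-, -, hmem⟩ := hqA
    rw [Finset.mem_image]
    refine ⟨⟨q, hlt⟩, ?_, rfl⟩
    rw [hS, Finset.mem_filter]
    refine ⟨Finset.mem_univ _, ?_⟩
    have hch : Stmt2Aux.choose G ι ω q.1 q.2 = ω ⟨q, hlt⟩ := by
      simp only [Stmt2Aux.choose]
      rw [dif_pos hlt]
    rw [← hch]
    exact hmem
  have hA2 : A.filter (fun q : V × V => ¬ ι q.1 < ι q.2)
      ⊆ S.image (fun s => (s.val.2, s.val.1)) := by
    intro q hq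
    rw [Finset.mem_filter] at hq
    obtain ⟨hqA, hnlt⟩ := hq
    rw [hA, Finset.mem_filter] at hqA
    obtain ⟨-, hne, hmem⟩ := hqA
    have hlt : ι q.2 < ι q.1 :=
      (not_lt.1 hnlt).lt_of_ne (fun heq => hne (ι.injective heq).symm)
    rw [Finset.mem_image]
    refine ⟨⟨(q.2, q.1), hlt⟩, ?_, rfl⟩
    rw [hS, Finset.mem_filter]
    refine ⟨Finset.mem_univ _, ?_⟩
    have hch : Stmt2Aux.choose G ι ω q.1 q.2 = (ω ⟨(q.2, q.1), hlt⟩).reverse := by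
      simp only [Stmt2Aux.choose]
      rw [dif_neg hnlt, dif_pos hlt]
    rw [hch] at hmem
    have : ((ω ⟨(q.2, q.1), hlt⟩).reverse : G.Walk q.1 q.2)
        = ((ω ⟨(q.2, q.1), hlt⟩ : G.Walk q.2 q.1)).reverse := rfl
    rw [this, SimpleGraph.Walk.edges_reverse, List.mem_reverse] at hmem
    exact hmem
  have hc1 : (A.filter (fun q : V × V => ι q.1 < ι q.2)).card ≤ S.card :=
    le_trans (Finset.card_le_card hA1) Finset.card_image_le
  have hc2 : (A.filter (fun q : V × V => ¬ ι q.1 < ι q.2)).card ≤ S.card :=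
    le_trans (Finset.card_le_card hA2) Finset.card_image_le
  have hAcard : A.card ≤ 2 * S.card := by omega
  calc (A.card : ℝ) ≤ (2 * S.card : ℕ) := by exact_mod_cast hAcard
    _ ≤ 2 * (2 * C) := by push_cast; linarith [hX]
end

section
/- Let V ⊆ {0,1}^n and let u,v ∈ V be such that cube(u,v) ∩ V = {u,v}, where cube(u,v) is the smallest subcube containing u and v. Then the segment [u,v] is an edge (1-dimensional face) of the polytope conv(V). -/
open Finset

/-- The linear functional `x ↦ ∑ i, a i · x i` evaluated on a 0/1-vector. -/
def lin {n : ℕ} (a : Fin n → ℝ) (x : Fin n → Bool) : ℝ :=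
  ∑ i, a i * (if x i then 1 else 0)

/-- The smallest subcube of `{0,1}ⁿ` containing `u` and `v`. -/
def cube {n : ℕ} (u v : Fin n → Bool) : Set (Fin n → Bool) :=
  {z | ∀ i, u i = v i → z i = u i}

/-- `uv` is an edge (1-dimensional face) of `conv(V)`: both lie in `V` and some linear
functional attains its maximum over `V` exactly at `u` and `v`. -/
def IsPolytopeEdge {n : ℕ} (V : Set (Fin n → Bool)) (u v : Fin n → Bool) : Prop :=
  u ∈ V ∧ v ∈ V ∧ ∃ (a : Fin n → ℝ) (b : ℝ),
    lin a u = b ∧ lin a v = b ∧ ∀ w ∈ V, w ≠ u → w ≠ v → lin a w < b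

/-- Lemma 2.8: if `cube(u,v) ∩ V = {u,v}`, then `uv` is an edge of `conv(V)`. -/
theorem stmt_3 {n : ℕ} (V : Set (Fin n → Bool)) (u v : Fin n → Bool)
    (hu : u ∈ V) (hv : v ∈ V) (huv : u ≠ v)
    (hcube : cube u v ∩ V = {u, v}) :
    IsPolytopeEdge V u v := by
  set a : Fin n → ℝ := fun i => if u i = v i then (if u i then 1 else -1) else 0 with ha
  have hterm : ∀ (w : Fin n → Bool) (i : Fin n),
      a i * (if w i then 1 else 0) ≤ a i * (if u i then 1 else 0) := by
    intro w i
    simp only [ha]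
    rcases Bool.eq_false_or_eq_true (u i) with h | h <;>
      rcases Bool.eq_false_or_eq_true (v i) with h' | h' <;>
      rcases Bool.eq_false_or_eq_true (w i) with h'' | h'' <;>
      simp [h, h', h'']
  have key : ∀ w : Fin n → Bool, w ∉ cube u v → lin a w < lin a u := by
    intro w hw
    obtain ⟨i, hi⟩ : ∃ i, u i = v i ∧ ¬ w i = u i := by
      by_contra hc
      push_neg at hc
      exact hw (fun i h => hc i h)
    apply Finset.sum_lt_sum (fun i _ => hterm w i)
    refine ⟨i, Finset.mem_univ i, ?_⟩
    rcases Bool.eq_false_or_eq_true (u i) with h | h <;>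
      rcases Bool.eq_false_or_eq_true (w i) with h'' | h'' <;>
      simp_all [ha]
  have huvlin : lin a u = lin a v := by
    unfold lin
    apply Finset.sum_congr rfl
    intro i _
    simp only [ha]
    rcases Bool.eq_false_or_eq_true (u i) with h | h <;>
      rcases Bool.eq_false_or_eq_true (v i) with h' | h' <;>
      simp [h, h']
  refine ⟨hu, hv, a, lin a u, rfl, huvlin.symm, ?_⟩
  intro w hwV hwu hwv
  apply key
  intro hwc
  have : w ∈ ({u, v} : Set (Fin n → Bool)) := hcube ▸ ⟨hwc, hwV⟩
  rcases this with h | h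
  · exact hwu h
  · exact hwv h
end

section
/- Let V ⊆ {0,1}^n, u,v ∈ V, and let G be the graph of conv(V). If S_1(u) ⊆ V \ {v}, i.e., every point at Hamming-distance 1 from u belongs to V and is different from v, then uv is not an edge of G. -/
open Finset

lemma lin_update {n : ℕ} (a : Fin n → ℝ) (u : Fin n → Bool) (i : Fin n) (x : Bool) :
    lin a (Function.update u i x) =
      lin a u - a i * (if u i then 1 else 0) + a i * (if x then 1 else 0) := by
  unfold lin
  have h : ∀ j : Fin n, a j * (if Function.update u i x j then (1:ℝ) else 0) =
      Function.update (fun j => a j * (if u j then (1:ℝ) else 0)) i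
        (a i * (if x then 1 else 0)) j := by
    intro j
    rcases eq_or_ne j i with rfl | hj
    · simp
    · simp [Function.update_of_ne hj]
  rw [Finset.sum_congr rfl (fun j _ => h j), Finset.sum_update_of_mem (Finset.mem_univ i)]
  rw [Finset.sdiff_singleton_eq_erase i Finset.univ, Finset.sum_erase_eq_sub (Finset.mem_univ i)]
  ring

lemma hd_update {n : ℕ} (u : Fin n → Bool) (i : Fin n) :
    hammingDist u (Function.update u i (!u i)) = 1 := by
  have : Finset.univ.filter (fun j => u j ≠ Function.update u i (!u i) j) = {i} := by
    ext j
    rcases eq_or_ne j i with rfl | hj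
    · simp
    · simp [Function.update_of_ne hj, hj]
  rw [hammingDist, this, Finset.card_singleton]

/-- Lemma 2.9(a): if every point at Hamming-distance 1 from `u` lies in `V \ {v}`,
then `uv` is not an edge of the graph of `conv(V)`. -/
theorem stmt_4 {n : ℕ} (V : Set (Fin n → Bool)) (u v : Fin n → Bool)
    (hu : u ∈ V) (hv : v ∈ V) (huv : u ≠ v)
    (hS : ∀ z : Fin n → Bool, hammingDist u z = 1 → z ∈ V ∧ z ≠ v) :
    ¬ IsPolytopeEdge V u v := by
  rintro ⟨-, -, a, b, hau, hav, hlt⟩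
  -- sign of a i
  have hsign : ∀ i : Fin n, a i * ((if v i then (1:ℝ) else 0) - (if u i then 1 else 0)) ≤ 0 ∧
      (u i ≠ v i → a i * ((if v i then (1:ℝ) else 0) - (if u i then 1 else 0)) < 0) := by
    intro i
    set z := Function.update u i (!u i) with hz
    obtain ⟨hzV, hzv⟩ := hS z (hd_update u i)
    have hzu : z ≠ u := by
      intro h
      have := congrFun h i
      simp [hz] at this
    have hlz : lin a z < b := hlt z hzV hzu hzv
    rw [lin_update, hau] at hlz
    cases hui : u i <;> cases hvi : v i <;> simp [hui] at hlz <;>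
      simp [hui, hvi] <;> constructor <;> linarith
  have hsum : (∑ i, a i * ((if v i then (1:ℝ) else 0) - (if u i then 1 else 0))) < 0 := by
    obtain ⟨j, hj⟩ : ∃ j, u j ≠ v j := by
      by_contra h
      push_neg at h
      exact huv (funext h)
    calc ∑ i, a i * ((if v i then (1:ℝ) else 0) - (if u i then 1 else 0))
        < ∑ _i : Fin n, (0:ℝ) := by
          apply Finset.sum_lt_sum (fun i _ => (hsign i).1) ⟨j, Finset.mem_univ j, (hsign j).2 hj⟩
      _ = 0 := by simp
  have heq : (∑ i, a i * ((if v i then (1:ℝ) else 0) - (if u i then 1 else 0))) = lin a v - lin a u := by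
    unfold lin
    rw [← Finset.sum_sub_distrib]
    exact Finset.sum_congr rfl fun i _ => by ring
  rw [heq, hau, hav] at hsum
  linarith
end

section
/- Let V ⊆ {0,1}^n, u,v ∈ V, and let G be the graph of conv(V). If there exist s,t ∈ V with s,t ∈ cube(u,v) \ {u,v} and s ⊕ t = u ⊕ v (coordinatewise XOR), then uv is not an edge of G. -/
open Finset

/-- Coordinatewise XOR of 0/1-vectors. -/
def xorv {n : ℕ} (a b : Fin n → Bool) : Fin n → Bool := fun i => xor (a i) (b i)

/-- Lemma 2.9(b): if there are `s, t ∈ (cube(u,v) ∩ V) \ {u,v}` with `s ⊕ t = u ⊕ v`,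
then `uv` is not an edge of the graph of `conv(V)`. -/
theorem stmt_5 {n : ℕ} (V : Set (Fin n → Bool)) (u v s t : Fin n → Bool)
    (hu : u ∈ V) (hv : v ∈ V) (hs : s ∈ V) (ht : t ∈ V)
    (hsc : s ∈ cube u v) (htc : t ∈ cube u v)
    (hsu : s ≠ u) (hsv : s ≠ v) (htu : t ≠ u) (htv : t ≠ v)
    (hxor : xorv s t = xorv u v) :
    ¬ IsPolytopeEdge V u v := by
  rintro ⟨-, -, a, b, hub, hvb, hmax⟩
  have hs' := hmax s hs hsu hsv
  have ht' := hmax t ht htu htv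
  have key : lin a s + lin a t = lin a u + lin a v := by
    unfold lin
    rw [← Finset.sum_add_distrib, ← Finset.sum_add_distrib]
    apply Finset.sum_congr rfl
    intro i _
    have hx : xor (s i) (t i) = xor (u i) (v i) := congrFun hxor i
    by_cases h : u i = v i
    · rw [hsc i h, htc i h, h]
    · have husi : s i ≠ t i := by
        intro he
        rw [he, Bool.xor_self] at hx
        cases u i <;> cases v i <;> simp_all
      cases hsi : s i <;> cases hti : t i <;> cases hui : u i <;> cases hvi : v i <;>
        simp_all <;> ring
  have : lin a s + lin a t < b + b := add_lt_add hs' ht'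
  rw [key, hub, hvb] at this
  exact lt_irrefl _ this
end

section
/- Let d < n with d odd. The distance-d Hamming graph Q_n^d on vertex set {0,1}^n (vertices adjacent iff their Hamming distance equals d) admits an all-pair unit-demand multicommodity flow φ with cng(φ) ≤ n·2^n / C(n,d). Consequently cng(Q_n^d) ≤ n·2^n/C(n,d). -/
open Finset

/-- The distance-`d` Hamming graph on `{0,1}ⁿ`. -/
def Qnd (n d : ℕ) : SimpleGraph (Fin n → Bool) where
  Adj x y := x ≠ y ∧ hammingDist x y = d
  symm := by
    constructor
    intro x y h
    exact ⟨h.1.symm, by rw [hammingDist_comm]; exact h.2⟩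
  loopless := by constructor; intro x h; exact h.1 rfl

instance (n d : ℕ) : DecidableRel (Qnd n d).Adj := fun x y =>
  inferInstanceAs (Decidable (x ≠ y ∧ hammingDist x y = d))

open scoped symmDiff

/-!
For odd `d < n`, two vertices at Hamming distance `k` are joined in `Q_n^d` by a path of length
at most `distBound d k`: an even number of differing coordinates is removed two at a time (two
moves sharing `d - 1` spare coordinates, which exist because `d < n`), and an odd number after
one move whose `d` flipped coordinates contain, or are contained in, the differing ones.
Averaging one such path system over all automorphisms (translations composed with coordinate
permutations) gives a flow; since the automorphisms act transitively on edges, its load on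
every edge is the total path length divided by the number `2ⁿ⁻¹ C(n,d)` of edges. The total
length is at most `2ⁿ · n 2ⁿ⁻¹`: pairing the odd distances `k` and `d + 1 - k` shows that the
binomial average of `distBound d k` does not exceed the average `n / 2` of `k`.
-/

namespace SimpleGraph

variable {V : Type*} {G : SimpleGraph V}

instance Iso.finite [Finite V] : Finite (G ≃g G) :=
  Finite.of_injective _ RelIso.toEquiv_injective

def IsEdgeTransitive (G : SimpleGraph V) : Prop :=
  ∀ e ∈ G.edgeSet, ∀ f ∈ G.edgeSet, ∃ σ : G ≃g G, Sym2.map σ e = f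

def Iso.transportPath (σ : G ≃g G) {x y : V} (p : G.Path (σ.symm x) (σ.symm y)) :
    G.Path x y :=
  ⟨(p.map σ.toHom σ.injective).1.copy (σ.apply_symm_apply x) (σ.apply_symm_apply y),
    (Walk.isPath_copy _ _ _).2 (p.map σ.toHom σ.injective).2⟩

lemma Iso.mem_edges_transportPath (σ : G ≃g G) {x y : V} (p : G.Path (σ.symm x) (σ.symm y))
    (e : Sym2 V) :
    e ∈ (σ.transportPath p).1.edges ↔ Sym2.map σ.symm e ∈ p.1.edges := by
  simp only [transportPath, Walk.edges_copy, Path.map_coe, Walk.edges_map, List.mem_map]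
  constructor
  · rintro ⟨f, hf, rfl⟩
    simpa [Sym2.map_map] using hf
  · intro h
    exact ⟨_, h, by simp [Sym2.map_map]⟩

section Finite

variable [Fintype V] [DecidableRel G.Adj]

lemma Iso.sum_edgeFinset_comp_map {R : Type*} [AddCommMonoid R] (σ : G ≃g G)
    (F : Sym2 V → R) : ∑ f ∈ G.edgeFinset, F (Sym2.map σ f) = ∑ f ∈ G.edgeFinset, F f :=
  sum_nbij' (Sym2.map σ) (Sym2.map σ.symm) (by simp [σ.map_mem_edgeSet_iff])
    (by simp [σ.symm.map_mem_edgeSet_iff]) (by simp [Sym2.map_map]) (by simp [Sym2.map_map])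
    fun _ _ => rfl

theorem IsEdgeTransitive.card_edgeFinset_smul_sum_map {R : Type*} [AddCommMonoid R]
    [Fintype (G ≃g G)] (hG : G.IsEdgeTransitive) (F : Sym2 V → R) {e : Sym2 V}
    (he : e ∈ G.edgeFinset) :
    #G.edgeFinset • ∑ σ : G ≃g G, F (Sym2.map σ e) =
      Fintype.card (G ≃g G) • ∑ f ∈ G.edgeFinset, F f := by
  have orbit_sum_const : ∀ f ∈ G.edgeFinset,
      ∑ σ : G ≃g G, F (Sym2.map σ f) = ∑ σ : G ≃g G, F (Sym2.map σ e) := by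
    intro f hf
    obtain ⟨τ, rfl⟩ := hG e (mem_edgeFinset.1 he) f (mem_edgeFinset.1 hf)
    simp only [Sym2.map_map]
    exact Fintype.sum_equiv (Equiv.mulRight τ) _ _ fun σ => rfl
  calc #G.edgeFinset • ∑ σ : G ≃g G, F (Sym2.map σ e)
      = ∑ f ∈ G.edgeFinset, ∑ σ : G ≃g G, F (Sym2.map σ f) := by
        rw [sum_congr rfl orbit_sum_const, sum_const]
    _ = ∑ σ : G ≃g G, ∑ f ∈ G.edgeFinset, F f := by
        rw [sum_comm]
        exact sum_congr rfl fun σ _ => σ.sum_edgeFinset_comp_map F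
    _ = Fintype.card (G ≃g G) • ∑ f ∈ G.edgeFinset, F f := by rw [sum_const, card_univ]

lemma Walk.IsTrail.sum_edgeFinset_boole [DecidableEq V] {u v : V} {p : G.Walk u v}
    (hp : p.IsTrail) :
    ∑ f ∈ G.edgeFinset, (if f ∈ p.edges then 1 else 0 : ℝ) = p.length := by
  rw [sum_boole, ← p.length_edges, ← List.toFinset_card_of_nodup hp.edges_nodup]
  congr 2
  ext f
  simpa using fun hf => p.edges_subset_edgeSet hf

end Finite

variable [DecidableEq V]

noncomputable def symmetrizedFlow [Fintype (G ≃g G)] (P : ∀ x y, G.Path x y) (x y : V)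
    (p : G.Path x y) : ℝ :=
  (∑ σ : G ≃g G, if σ.transportPath (P (σ.symm x) (σ.symm y)) = p then 1 else 0) /
    Fintype.card (G ≃g G)

lemma symmetrizedFlow_nonneg [Fintype (G ≃g G)] (P : ∀ x y, G.Path x y) (x y : V)
    (p : G.Path x y) : 0 ≤ symmetrizedFlow P x y p := by
  unfold symmetrizedFlow
  positivity

variable [Fintype V] [DecidableRel G.Adj]

def edgeLoad (φ : ∀ x y : V, G.Path x y → ℝ) (e : Sym2 V) : ℝ :=
  ∑ x, ∑ y, ∑ p : G.Path x y, if e ∈ p.1.edges then φ x y p else 0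

variable [Fintype (G ≃g G)] (P : ∀ x y, G.Path x y)

lemma sum_symmetrizedFlow (x y : V) : ∑ p : G.Path x y, symmetrizedFlow P x y p = 1 := by
  simp only [symmetrizedFlow, ← sum_div]
  rw [sum_comm]
  simp [sum_ite_eq]

lemma sum_edges_symmetrizedFlow (e : Sym2 V) (x y : V) :
    ∑ p : G.Path x y, (if e ∈ p.1.edges then symmetrizedFlow P x y p else 0) =
      (∑ σ : G ≃g G,
        if Sym2.map σ.symm e ∈ (P (σ.symm x) (σ.symm y)).1.edges then 1 else 0) /
        Fintype.card (G ≃g G) := by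
  simp only [symmetrizedFlow, div_eq_mul_inv, ← ite_zero_mul, ← sum_mul]
  congr 1
  calc ∑ p : G.Path x y, (if e ∈ p.1.edges then
          ∑ σ : G ≃g G, (if σ.transportPath (P (σ.symm x) (σ.symm y)) = p then (1 : ℝ) else 0)
          else 0)
      = ∑ σ : G ≃g G, ∑ p : G.Path x y,
          if σ.transportPath (P (σ.symm x) (σ.symm y)) = p then
            (if e ∈ (σ.transportPath (P (σ.symm x) (σ.symm y))).1.edges then 1 else 0) else 0 := by
        rw [sum_comm]
        refine sum_congr rfl fun p _ => ?_
        split_ifs <;> simp_all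
    _ = _ := by simp [sum_ite_eq, Iso.mem_edges_transportPath]

theorem IsEdgeTransitive.edgeLoad_symmetrizedFlow (hG : G.IsEdgeTransitive) {e : Sym2 V}
    (he : e ∈ G.edgeFinset) :
    edgeLoad (symmetrizedFlow P) e = (∑ x, ∑ y, ((P x y).1.length : ℝ)) / #G.edgeFinset := by
  set L : Sym2 V → ℝ := fun f => ∑ x, ∑ y, if f ∈ (P x y).1.edges then 1 else 0
  have load_eq : edgeLoad (symmetrizedFlow P) e =
      (∑ σ : G ≃g G, L (Sym2.map σ.symm e)) / Fintype.card (G ≃g G) := by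
    simp only [edgeLoad, sum_edges_symmetrizedFlow, ← sum_div]
    congr 1
    rw [sum_congr rfl fun x _ => sum_comm, sum_comm]
    exact sum_congr rfl fun σ _ => Fintype.sum_equiv σ.symm.toEquiv _ _ fun x =>
      Fintype.sum_equiv σ.symm.toEquiv _ _ fun y => rfl
  have inv_reindex : ∑ σ : G ≃g G, L (Sym2.map σ.symm e) = ∑ σ : G ≃g G, L (Sym2.map σ e) :=
    Fintype.sum_equiv (Equiv.inv _) _ _ fun _ => rfl
  have orbit := hG.card_edgeFinset_smul_sum_map L he
  have total : ∑ f ∈ G.edgeFinset, L f = ∑ x, ∑ y, ((P x y).1.length : ℝ) := by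
    simp only [L]
    rw [sum_comm]
    refine sum_congr rfl fun x _ => ?_
    rw [sum_comm]
    exact sum_congr rfl fun y _ => (P x y).2.isTrail.sum_edgeFinset_boole
  have hE : (#G.edgeFinset : ℝ) ≠ 0 := Nat.cast_ne_zero.2 (card_ne_zero_of_mem he)
  have hΓ : (Fintype.card (G ≃g G) : ℝ) ≠ 0 := Nat.cast_ne_zero.2 Fintype.card_ne_zero
  rw [load_eq, inv_reindex, ← total]
  simp only [nsmul_eq_mul] at orbit
  field_simp
  linarith

end SimpleGraph

section BoolCube

variable {ι : Type*}

lemma hammingDist_xor_left [Fintype ι] (a x y : ι → Bool) :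
    hammingDist (fun i => xor (a i) (x i)) (fun i => xor (a i) (y i)) = hammingDist x y :=
  hammingDist_comp (fun i => xor (a i)) fun _ _ _ => Bool.xor_right_inj.1

lemma hammingDist_comp_perm [Fintype ι] {β : Type*} [DecidableEq β] (σ : Equiv.Perm ι)
    (x y : ι → β) :
    hammingDist (x ∘ σ) (y ∘ σ) = hammingDist x y := by
  unfold hammingDist
  exact card_equiv σ (by simp)

lemma exists_hammingDist_isometry [Fintype ι] {x y u v : ι → Bool}
    (h : hammingDist x y = hammingDist u v) :
    ∃ f : (ι → Bool) ≃ (ι → Bool), (∀ z w, hammingDist (f z) (f w) = hammingDist z w) ∧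
      f x = u ∧ f y = v := by
  obtain ⟨σ, hσ⟩ := Equiv.Perm.exists_map_finset_eq {i | x i ≠ y i} {i | u i ≠ v i} h
  have hmem : ∀ i, x i ≠ y i ↔ u (σ i) ≠ v (σ i) := fun i => by
    simpa using (Finset.ext_iff.1 hσ (σ i))
  set g : (ι → Bool) → ι → Bool := fun z j => xor (u j) (xor (x (σ.symm j)) (z (σ.symm j)))
  have hg : ∀ z w, hammingDist (g z) (g w) = hammingDist z w := fun z w => by
    rw [hammingDist_xor_left]
    exact (hammingDist_comp_perm σ.symm (fun i => xor (x i) (z i)) _).trans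
      (hammingDist_xor_left x z w)
  have hinj : Function.Injective g := fun z w h =>
    hammingDist_eq_zero.1 ((hg z w).symm.trans (hammingDist_eq_zero.2 h))
  refine ⟨Equiv.ofBijective g (Finite.injective_iff_bijective.1 hinj), hg, ?_, ?_⟩
  · funext j
    simp [g]
  · funext j
    have := hmem (σ.symm j)
    simp only [Equiv.apply_symm_apply] at this
    cases hx : x (σ.symm j) <;> cases hy : y (σ.symm j) <;> cases hu : u j <;> cases hv : v j <;>
      simp_all [g]

variable [DecidableEq ι]

def flipOn (S : Finset ι) (x : ι → Bool) : ι → Bool := fun i => xor (decide (i ∈ S)) (x i)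

@[simp]
lemma flipOn_empty (x : ι → Bool) : flipOn ∅ x = x := by
  funext i
  simp [flipOn]

lemma flipOn_flipOn (S T : Finset ι) (x : ι → Bool) :
    flipOn T (flipOn S x) = flipOn (S ∆ T) x := by
  funext i
  by_cases hS : i ∈ S <;> by_cases hT : i ∈ T <;> simp [flipOn, mem_symmDiff, hS, hT]

variable [Fintype ι]

lemma hammingDist_flipOn_self (S : Finset ι) (x : ι → Bool) :
    hammingDist x (flipOn S x) = #S := by
  unfold hammingDist
  congr 1
  ext i
  rw [mem_filter_univ]
  by_cases hS : i ∈ S <;> simp [flipOn, hS]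

lemma flipOn_filter_ne (x y : ι → Bool) : flipOn {i | x i ≠ y i} x = y := by
  funext i
  cases hx : x i <;> cases hy : y i <;> simp [flipOn, hx, hy]

lemma flipOn_bijective (x : ι → Bool) : Function.Bijective fun S : Finset ι => flipOn S x := by
  refine ⟨fun S T h => ?_, fun y => ⟨_, flipOn_filter_ne x y⟩⟩
  ext i
  simpa [flipOn] using congrFun h i

lemma sum_hammingDist_eq {M : Type*} [AddCommMonoid M] (x : ι → Bool) (f : ℕ → M) :
    ∑ y, f (hammingDist x y) =
      ∑ k ∈ range (Fintype.card ι + 1), (Fintype.card ι).choose k • f k := by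
  rw [← card_univ, ← sum_powerset_apply_card, powerset_univ,
    ← Fintype.sum_bijective _ (flipOn_bijective x) (fun S => f #S) _ fun S => by
      rw [hammingDist_flipOn_self]]

end BoolCube

theorem Nat.choose_le_choose_of_le_of_add_le {n a b : ℕ} (hab : a ≤ b) (h : a + b ≤ n) :
    n.choose a ≤ n.choose b := by
  have hba : b.choose a ≤ (n - a).choose (b - a) :=
    calc b.choose a = b.choose (b - a) := (Nat.choose_symm hab).symm
      _ ≤ (n - a).choose (b - a) := Nat.choose_le_choose _ (by omega)
  have hpos : 0 < (n - a).choose (b - a) := Nat.choose_pos (by omega)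
  refine Nat.le_of_mul_le_mul_right ?_ hpos
  calc n.choose a * (n - a).choose (b - a) = n.choose b * b.choose a :=
        (Nat.choose_mul hab).symm
    _ ≤ n.choose b * (n - a).choose (b - a) := Nat.mul_le_mul_left _ hba

namespace Qnd

def distBound (d k : ℕ) : ℕ := if Even k then k else if k ≤ d then d + 1 - k else k + 1 - d

def distBoundExcess (d k : ℕ) : ℤ := if k % 2 = 1 ∧ k ≤ d then (d : ℤ) + 1 - 2 * k else 0

variable {n d : ℕ}

lemma distBound_le_add_distBoundExcess (hd : Odd d) (k : ℕ) :
    (distBound d k : ℤ) ≤ k + distBoundExcess d k := by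
  have := hd.pos
  simp only [distBound, distBoundExcess, Nat.even_iff]
  split_ifs <;> omega

lemma distBoundExcess_reflect (hd : Odd d) {k : ℕ} (hk : k ≤ d + 1) :
    distBoundExcess d (d + 1 - k) = -distBoundExcess d k := by
  have := Nat.odd_iff.1 hd
  simp only [distBoundExcess]
  split_ifs <;> omega

/-- Pairing `k` with `d + 1 - k` flips the sign of the excess, and the positive one of the two
excesses always multiplies the smaller binomial coefficient. -/
lemma sum_choose_mul_distBoundExcess_nonpos (hd : Odd d) (hdn : d < n) :
    ∑ k ∈ range (n + 1), (n.choose k : ℤ) * distBoundExcess d k ≤ 0 := by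
  set c : ℕ → ℤ := fun k => n.choose k
  rw [← sum_subset (range_subset_range.2 (by omega : d + 2 ≤ n + 1)) fun k hk hk' => by
    simp only [mem_range] at hk hk'
    simp [distBoundExcess, show ¬k ≤ d by omega]]
  have pair_nonpos : ∀ k ∈ range (d + 2),
      distBoundExcess d k * (c k - c (d + 1 - k)) ≤ 0 := by
    intro k hk
    rw [mem_range] at hk
    rcases le_total (2 * k) (d + 1) with hk2 | hk2
    · refine mul_nonpos_of_nonneg_of_nonpos (by simp only [distBoundExcess]; split_ifs <;> omega)
        (sub_nonpos.2 (Nat.cast_le.2 (Nat.choose_le_choose_of_le_of_add_le (by omega) (by omega))))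
    · refine mul_nonpos_of_nonpos_of_nonneg (by simp only [distBoundExcess]; split_ifs <;> omega)
        (sub_nonneg.2 (Nat.cast_le.2 (Nat.choose_le_choose_of_le_of_add_le (by omega) (by omega))))
  have reflected := sum_range_reflect (fun k => c k * distBoundExcess d k) (d + 2)
  simp only [show d + 2 - 1 = d + 1 by omega] at reflected
  have pair_sum : 2 * ∑ k ∈ range (d + 2), c k * distBoundExcess d k =
      ∑ k ∈ range (d + 2), distBoundExcess d k * (c k - c (d + 1 - k)) := by
    rw [two_mul]
    nth_rewrite 2 [← reflected]
    rw [← sum_add_distrib]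
    refine sum_congr rfl fun k hk => ?_
    rw [distBoundExcess_reflect hd (by simpa [Nat.lt_succ_iff] using hk)]
    ring
  linarith [sum_nonpos pair_nonpos]

theorem two_mul_sum_choose_mul_distBound_le (hd : Odd d) (hdn : d < n) :
    2 * ∑ k ∈ range (n + 1), n.choose k * distBound d k ≤ n * 2 ^ n := by
  have mean : 2 * ∑ k ∈ range (n + 1), k * n.choose k = n * 2 ^ n := by
    rw [Nat.sum_range_mul_choose, ← mul_assoc, mul_comm 2 n, mul_assoc, ← pow_succ',
      Nat.sub_add_cancel (by omega)]
  suffices h : (∑ k ∈ range (n + 1), (n.choose k * distBound d k : ℕ) : ℤ) ≤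
      ∑ k ∈ range (n + 1), (k * n.choose k : ℕ) by
    have := Int.ofNat_le.1 (by exact_mod_cast h)
    omega
  push_cast
  calc ∑ k ∈ range (n + 1), (n.choose k : ℤ) * distBound d k
      ≤ ∑ k ∈ range (n + 1), (n.choose k : ℤ) * (k + distBoundExcess d k) :=
        sum_le_sum fun k _ => mul_le_mul_of_nonneg_left
          (distBound_le_add_distBoundExcess hd k) (by positivity)
    _ = ∑ k ∈ range (n + 1), (k : ℤ) * n.choose k +
          ∑ k ∈ range (n + 1), (n.choose k : ℤ) * distBoundExcess d k := by
        rw [← sum_add_distrib]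
        exact sum_congr rfl fun k _ => by ring
    _ ≤ ∑ k ∈ range (n + 1), (k : ℤ) * n.choose k := by
        linarith [sum_choose_mul_distBoundExcess_nonpos hd hdn]

lemma adj_iff (hd : 0 < d) {x y : Fin n → Bool} : (Qnd n d).Adj x y ↔ hammingDist x y = d :=
  ⟨And.right, fun h => ⟨fun hxy => by simp [hxy] at h; omega, h⟩⟩

def isoOfIsometry (f : (Fin n → Bool) ≃ (Fin n → Bool))
    (hf : ∀ z w, hammingDist (f z) (f w) = hammingDist z w) : Qnd n d ≃g Qnd n d :=
  ⟨f, by simp [Qnd, hf]⟩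

lemma isEdgeTransitive : (Qnd n d).IsEdgeTransitive := by
  intro e he f hf
  induction e using Sym2.ind with | _ x y => ?_
  induction f using Sym2.ind with | _ u v => ?_
  obtain ⟨g, hg, hx, hy⟩ := exists_hammingDist_isometry (he.2.trans hf.2.symm)
  exact ⟨isoOfIsometry g hg, congr_arg₂ (fun a b => s(a, b)) hx hy⟩

lemma adj_flipOn (hd : 0 < d) {S : Finset (Fin n)} (hS : #S = d) (x : Fin n → Bool) :
    (Qnd n d).Adj x (flipOn S x) :=
  (adj_iff hd).2 ((hammingDist_flipOn_self S x).trans hS)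

lemma edist_flipOn_le_one (hd : 0 < d) {S : Finset (Fin n)} (hS : #S = d) (x : Fin n → Bool) :
    (Qnd n d).edist x (flipOn S x) ≤ 1 :=
  (SimpleGraph.edist_eq_one_iff_adj.2 (adj_flipOn hd hS x)).le

lemma edist_flipOn_symmDiff_le {S T : Finset (Fin n)} {a b : ℕ∞}
    (hS : ∀ x, (Qnd n d).edist x (flipOn S x) ≤ a) (hT : ∀ x, (Qnd n d).edist x (flipOn T x) ≤ b)
    (x : Fin n → Bool) : (Qnd n d).edist x (flipOn (S ∆ T) x) ≤ a + b := by
  rw [← flipOn_flipOn]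
  exact SimpleGraph.edist_triangle.trans (add_le_add (hS x) (hT _))

lemma edist_flipOn_le_two (hd : 0 < d) (hdn : d < n) {S : Finset (Fin n)} (hS : #S = 2)
    (x : Fin n → Bool) : (Qnd n d).edist x (flipOn S x) ≤ 2 := by
  obtain ⟨i, j, hij, rfl⟩ := card_eq_two.1 hS
  obtain ⟨M, hM, hMcard⟩ := exists_subset_card_eq (s := ({i, j}ᶜ : Finset (Fin n))) (n := d - 1)
    (by rw [card_compl, Fintype.card_fin, hS]; omega)
  have hiM : i ∉ M := fun h => by simpa using hM h
  have hjM : j ∉ M := fun h => by simpa using hM h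
  have hsymm : insert i M ∆ insert j M = {i, j} := by
    ext k
    by_cases hki : k = i <;> by_cases hkj : k = j <;> simp_all [mem_symmDiff]
  rw [← hsymm, ← one_add_one_eq_two]
  exact edist_flipOn_symmDiff_le
    (edist_flipOn_le_one hd (by rw [card_insert_of_notMem hiM]; omega))
    (edist_flipOn_le_one hd (by rw [card_insert_of_notMem hjM]; omega)) x

lemma edist_flipOn_le_card_of_even (hd : 0 < d) (hdn : d < n) {S : Finset (Fin n)}
    (hS : Even #S) (x : Fin n → Bool) : (Qnd n d).edist x (flipOn S x) ≤ #S := by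
  obtain ⟨m, hm⟩ := hS
  induction m generalizing S x with
  | zero =>
    obtain rfl : S = ∅ := card_eq_zero.1 (by omega)
    simp
  | succ m ih =>
    obtain ⟨T, hTS, hT⟩ := exists_subset_card_eq (show 2 ≤ #S by omega)
    have hcard : #(S \ T) = m + m := by rw [card_sdiff_of_subset hTS]; omega
    have := edist_flipOn_symmDiff_le (edist_flipOn_le_two hd hdn hT) (ih · hcard) x
    rw [symmDiff_sdiff_eq_sup, sup_eq_right.2 hTS] at this
    refine this.trans ?_
    rw [hcard, hm]
    norm_cast
    omega

lemma edist_flipOn_le_distBound_of_odd (hd : Odd d) (hdn : d < n) {S : Finset (Fin n)}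
    (hS : Odd #S) (x : Fin n → Bool) : (Qnd n d).edist x (flipOn S x) ≤ distBound d #S := by
  have via_step : ∀ F : Finset (Fin n), #F = d → Even #(F ∆ S) →
      (Qnd n d).edist x (flipOn S x) ≤ 1 + #(F ∆ S) := fun F hF heven => by
    simpa only [symmDiff_symmDiff_cancel_left] using edist_flipOn_symmDiff_le
      (edist_flipOn_le_one hd.pos hF) (edist_flipOn_le_card_of_even hd.pos hdn heven) x
  rw [distBound, if_neg (Nat.not_even_iff_odd.2 hS)]
  split_ifs with hSd
  · obtain ⟨F, hSF, -, hF⟩ := exists_subsuperset_card_eq (subset_univ S) hSd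
      (by rw [card_univ, Fintype.card_fin]; omega)
    have hcard : #(F ∆ S) = d - #S := by rw [symmDiff_of_ge hSF, card_sdiff_of_subset hSF, hF]
    refine (via_step F hF (hcard ▸ Nat.Odd.sub_odd hd hS)).trans ?_
    rw [hcard]
    norm_cast
    omega
  · obtain ⟨F, hFS, hF⟩ := exists_subset_card_eq (show d ≤ #S by omega)
    have hcard : #(F ∆ S) = #S - d := by rw [symmDiff_of_le hFS, card_sdiff_of_subset hFS, hF]
    refine (via_step F hF (hcard ▸ Nat.Odd.sub_odd hS hd)).trans ?_
    rw [hcard]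
    norm_cast
    omega

lemma edist_le_distBound (hd : Odd d) (hdn : d < n) (x y : Fin n → Bool) :
    (Qnd n d).edist x y ≤ distBound d (hammingDist x y) := by
  rw [← flipOn_filter_ne x y, hammingDist_flipOn_self]
  rcases Nat.even_or_odd #({i | x i ≠ y i} : Finset (Fin n)) with heven | hodd
  · rw [distBound, if_pos heven]
    exact edist_flipOn_le_card_of_even hd.pos hdn heven x
  · exact edist_flipOn_le_distBound_of_odd hd hdn hodd x

lemma exists_path_length_le (hd : Odd d) (hdn : d < n) (x y : Fin n → Bool) :
    ∃ p : (Qnd n d).Path x y, p.1.length ≤ distBound d (hammingDist x y) := by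
  have h := edist_le_distBound hd hdn x y
  obtain ⟨w, hw⟩ := SimpleGraph.exists_walk_of_edist_ne_top (ne_top_of_le_ne_top (by simp) h)
  refine ⟨w.toPath, w.length_bypass_le_length.trans ?_⟩
  exact_mod_cast hw ▸ h

lemma degree_eq (hd : 0 < d) (x : Fin n → Bool) : (Qnd n d).degree x = n.choose d := by
  rw [← SimpleGraph.card_neighborFinset_eq_degree, SimpleGraph.neighborFinset_eq_filter,
    card_filter]
  simp_rw [adj_iff hd]
  rw [sum_hammingDist_eq x fun k => if k = d then 1 else 0]
  simp only [Fintype.card_fin, smul_eq_mul, mul_ite, mul_one, mul_zero, sum_ite_eq', mem_range]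
  split_ifs
  · rfl
  · exact (Nat.choose_eq_zero_of_lt (by omega)).symm

lemma two_mul_card_edgeFinset (hd : 0 < d) :
    2 * #(Qnd n d).edgeFinset = 2 ^ n * n.choose d := by
  simp [← SimpleGraph.sum_degrees_eq_twice_card_edges, degree_eq hd]

lemma two_mul_sum_length_le (hd : Odd d) (hdn : d < n) (P : ∀ x y, (Qnd n d).Path x y)
    (hP : ∀ x y, (P x y).1.length ≤ distBound d (hammingDist x y)) :
    2 * ∑ x, ∑ y, (P x y).1.length ≤ 2 ^ n * (n * 2 ^ n) := by
  calc 2 * ∑ x, ∑ y, (P x y).1.length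
      ≤ ∑ x : Fin n → Bool, 2 * ∑ y, distBound d (hammingDist x y) := by
        rw [mul_sum]
        gcongr with x _ y
        exact hP x y
    _ ≤ ∑ _x : Fin n → Bool, n * 2 ^ n := sum_le_sum fun x _ => by
        simpa [sum_hammingDist_eq x (distBound d)] using two_mul_sum_choose_mul_distBound_le hd hdn
    _ = 2 ^ n * (n * 2 ^ n) := by simp

end Qnd

/-- Lemma 3.1: for odd `d < n`, `Q_n^d` admits an all-pair unit-demand multicommodity
flow with congestion at most `n·2ⁿ / C(n,d)`; hence `cng(Q_n^d) ≤ n·2ⁿ / C(n,d)`. -/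
theorem stmt_6 (n d : ℕ) (hd : Odd d) (hdn : d < n) :
    ∃ φ : ∀ x y : Fin n → Bool, (Qnd n d).Path x y → ℝ,
      (∀ x y p, 0 ≤ φ x y p) ∧
      (∀ x y : Fin n → Bool, x ≠ y → ∑ p : (Qnd n d).Path x y, φ x y p = 1) ∧
      ∀ e ∈ (Qnd n d).edgeFinset,
        ∑ x : Fin n → Bool, ∑ y : Fin n → Bool, ∑ p : (Qnd n d).Path x y,
          (if e ∈ (p : (Qnd n d).Walk x y).edges then φ x y p else 0)
          ≤ n * 2 ^ n / (n.choose d) := by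
  let : Fintype (Qnd n d ≃g Qnd n d) := Fintype.ofFinite _
  choose P hP using Qnd.exists_path_length_le hd hdn
  refine ⟨SimpleGraph.symmetrizedFlow P, SimpleGraph.symmetrizedFlow_nonneg P,
    fun x y _ => SimpleGraph.sum_symmetrizedFlow P x y, fun e he => ?_⟩
  change SimpleGraph.edgeLoad _ e ≤ _
  rw [Qnd.isEdgeTransitive.edgeLoad_symmetrizedFlow P he]
  have hlen : 2 * ∑ x, ∑ y, ((P x y).1.length : ℝ) ≤ 2 ^ n * (n * 2 ^ n) := by
    exact_mod_cast Qnd.two_mul_sum_length_le hd hdn P hP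
  have hedges : 2 * (#(Qnd n d).edgeFinset : ℝ) = 2 ^ n * n.choose d := by
    exact_mod_cast Qnd.two_mul_card_edgeFinset hd.pos
  have hchoose : (0 : ℝ) < n.choose d := by exact_mod_cast Nat.choose_pos hdn.le
  rw [div_le_div_iff₀ (by exact_mod_cast card_pos.2 ⟨e, he⟩) hchoose]
  linarith [mul_le_mul_of_nonneg_right hlen hchoose.le,
    congrArg (· * ((n : ℝ) * 2 ^ n)) hedges]
end

section
/- For every fixed edge e of Q_n^d, the number of pure paths (over all pairs x,y at Hamming distance 3d and all valid choices of t,u) that contain e is O(3^{3d}·C(n,d)^4). -/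
open Finset

def supp {n : ℕ} (x : Fin n → Bool) : Finset (Fin n) :=
  Finset.univ.filter (fun i => x i = true)

def suppList {n : ℕ} (x y : Fin n → Bool) : List (Fin n) :=
  Finset.sort (supp (xorv x y)) (· ≤ ·)

def fOne {n : ℕ} (d : ℕ) (x y : Fin n → Bool) : Fin n → Bool :=
  fun i => decide (i ∈ (suppList x y).take d)

def fTwo {n : ℕ} (d : ℕ) (x y : Fin n → Bool) : Fin n → Bool :=
  fun i => decide (i ∈ ((suppList x y).drop d).take d)

def pureList {n : ℕ} (d : ℕ) (x y t u : Fin n → Bool) : List (Fin n → Bool) :=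
  [x,
   xorv x t,
   xorv (xorv x t) u,
   xorv (xorv (xorv x t) u) (fOne d x y),
   xorv (xorv (xorv (xorv x t) u) (fOne d x y)) (fTwo d x y),
   xorv (xorv y t) u,
   xorv y u,
   y]

/-- The list of edges (as unordered pairs) of a list of vertices. -/
def edgesOfList {α : Type*} (l : List α) : List (Sym2 α) :=
  List.zipWith (fun a b => s(a, b)) l l.tail

/-- `(x, y, t, u)` determines a pure path: `dist_H(x,y) = 3d`, `t` and `u` have weight `d`,
and the supports of `t`, `u`, `x ⊕ y` are pairwise disjoint. -/
def IsPureQuad {n : ℕ} (d : ℕ) (q : (Fin n → Bool) × (Fin n → Bool) × (Fin n → Bool) × (Fin n → Bool)) : Prop :=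
  hammingDist q.1 q.2.1 = 3 * d ∧ (supp q.2.2.1).card = d ∧ (supp q.2.2.2).card = d ∧
    supp q.2.2.1 ∩ supp q.2.2.2 = ∅ ∧
    supp q.2.2.1 ∩ supp (xorv q.1 q.2.1) = ∅ ∧
    supp q.2.2.2 ∩ supp (xorv q.1 q.2.1) = ∅

instance {n d : ℕ} (q : (Fin n → Bool) × (Fin n → Bool) × (Fin n → Bool) × (Fin n → Bool)) :
    Decidable (IsPureQuad d q) := by unfold IsPureQuad; infer_instance

/-!
A pure path is determined by its start `x` and its five `d`-blocks `t, u, f₁, f₂, f₃`, where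
`f₁, f₂, f₃` partition `supp (x ⊕ y)`; it walks from `x` along `t, u, f₁, f₂, f₃, t, u`.
If it uses the edge `{a, b}` at step `i`, then the block of that step is `a ⊕ b`, its `i`-th
vertex is `a` or `b`, and `x` is that vertex shifted by the earlier blocks. Hence at most
`2 · C(n,d)⁴` pure paths use `{a, b}` at step `i`, and at most `14 · C(n,d)⁴` use it at all.
-/

open scoped symmDiff

theorem prod_eq_ite_of_sym2_eq {α : Type*} [DecidableEq α] {a b v w : α}
    (h : s(a, b) = s(v, w)) : (v, w) = if v = a then (a, b) else (b, a) := by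
  rcases Sym2.eq_iff.1 h with ⟨rfl, rfl⟩ | ⟨rfl, rfl⟩
  · simp
  · by_cases hba : b = a
    · subst hba; simp
    · simp [hba]

theorem card_filter_edge_at_le {Q V : Type*} [GeneralizedBooleanAlgebra V] [DecidableEq V]
    {m : ℕ}
    (P : Finset Q) (start : Q → V) (steps : Q → Fin (m + 1) → V)
    (hinj : Function.Injective fun q => (start q, steps q)) (T : Finset V)
    (hT : ∀ q ∈ P, ∀ k, steps q k ∈ T) (offset : (Fin (m + 1) → V) → V) (j : Fin (m + 1))
    (a b : V) :
    #{q ∈ P | s(a, b) = s(start q ∆ offset (steps q), start q ∆ offset (steps q) ∆ steps q j)}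
      ≤ 2 * #T ^ m := by
  set vertex := fun q => start q ∆ offset (steps q)
  calc _ ≤ #((univ : Finset Bool) ×ˢ Fintype.piFinset fun _ : Fin m => T) := by
        refine card_le_card_of_injOn (fun q => (decide (vertex q = a), j.removeNth (steps q)))
          (fun q hq => ?_) (fun q hq q' hq' hqq' => ?_)
        · simp only [coe_filter, Set.mem_ofPred_eq] at hq
          exact mem_product.2 ⟨mem_univ _, Fintype.mem_piFinset.2 fun k => hT q hq.1 _⟩
        · simp only [coe_filter, Set.mem_ofPred_eq, Prod.mk.injEq, decide_eq_decide] at hq hq' hqq'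
          have hedge := (prod_eq_ite_of_sym2_eq hq.2).trans
            ((if_congr hqq'.1 rfl rfl).trans (prod_eq_ite_of_sym2_eq hq'.2).symm)
          obtain ⟨hvertex, hnext⟩ := Prod.mk.inj hedge
          have hstep : steps q j = steps q' j := symmDiff_right_injective _ (hvertex ▸ hnext)
          have hsteps : steps q = steps q' := by
            rw [← j.insertNth_self_removeNth (steps q), ← j.insertNth_self_removeNth (steps q'),
              hstep, hqq'.2]
          have hstart : start q = start q' := by
            simpa [vertex, hsteps] using hvertex
          exact hinj (Prod.ext hstart hsteps)
    _ = 2 * #T ^ m := by simp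

section

variable {n : ℕ}

theorem xorv_eq_symmDiff (a b : Fin n → Bool) : xorv a b = a ∆ b := by
  funext i; simp [xorv]

def listIndicator (l : List (Fin n)) : Fin n → Bool := fun i => decide (i ∈ l)

theorem card_supp_listIndicator {l : List (Fin n)} (h : l.Nodup) :
    #(supp (listIndicator l)) = l.length := by
  rw [← List.toFinset_card_of_nodup h]
  congr 1
  ext i
  simp [supp, listIndicator]

theorem listIndicator_append {l₁ l₂ : List (Fin n)} (h : (l₁ ++ l₂).Nodup) :
    listIndicator (l₁ ++ l₂) = listIndicator l₁ ∆ listIndicator l₂ := by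
  funext i
  have hdisj : i ∈ l₁ → i ∉ l₂ := fun h₁ h₂ => List.disjoint_of_nodup_append h h₁ h₂
  by_cases h₁ : i ∈ l₁ <;> by_cases h₂ : i ∈ l₂ <;> simp_all [listIndicator]

theorem listIndicator_take_append_drop {l : List (Fin n)} (h : l.Nodup) (d : ℕ) :
    listIndicator l = listIndicator (l.take d) ∆ listIndicator (l.drop d) := by
  rw [← listIndicator_append (by rwa [List.take_append_drop]), List.take_append_drop]

theorem listIndicator_suppList (x y : Fin n → Bool) : listIndicator (suppList x y) = x ∆ y := by
  funext i
  simp [listIndicator, suppList, supp, xorv_eq_symmDiff]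
  cases x i <;> cases y i <;> rfl

theorem length_suppList (x y : Fin n → Bool) : (suppList x y).length = hammingDist x y := by
  rw [suppList, Finset.length_sort, hammingDist]
  congr 1
  ext i
  cases x i <;> cases y i <;> simp [supp, xorv]

def fThree (d : ℕ) (x y : Fin n → Bool) : Fin n → Bool :=
  listIndicator (((suppList x y).drop d).drop d)

theorem fOne_symmDiff_fTwo_symmDiff_fThree (d : ℕ) (x y : Fin n → Bool) :
    fOne d x y ∆ fTwo d x y ∆ fThree d x y = x ∆ y := by
  have hnodup : (suppList x y).Nodup := Finset.sort_nodup _ _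
  rw [← listIndicator_suppList x y, listIndicator_take_append_drop hnodup d,
    listIndicator_take_append_drop (hnodup.sublist (List.drop_sublist _ _)) d, symmDiff_assoc]
  rfl

theorem supp_injective : Function.Injective (supp : (Fin n → Bool) → Finset (Fin n)) := by
  intro v w h
  funext i
  have hi := Finset.ext_iff.1 h i
  simp only [supp, mem_filter, mem_univ, true_and] at hi
  exact Bool.eq_iff_iff.2 hi

theorem card_filter_card_supp_eq_le (d : ℕ) :
    #{v : Fin n → Bool | #(supp v) = d} ≤ n.choose d := by
  calc _ ≤ #(powersetCard d (univ : Finset (Fin n))) :=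
        card_le_card_of_injOn supp (fun v hv => by simp at hv; simp [hv]) supp_injective.injOn
    _ = n.choose d := by simp

abbrev Quad (n : ℕ) := (Fin n → Bool) × (Fin n → Bool) × (Fin n → Bool) × (Fin n → Bool)

def pathBlocks (d : ℕ) (q : Quad n) : Fin 5 → Fin n → Bool :=
  ![q.2.2.1, q.2.2.2, fOne d q.1 q.2.1, fTwo d q.1 q.2.1, fThree d q.1 q.2.1]

theorem injective_fst_pathBlocks (d : ℕ) :
    Function.Injective fun q : Quad n => (q.1, pathBlocks d q) := by
  rintro ⟨x, y, t, u⟩ ⟨x', y', t', u'⟩ h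
  obtain ⟨rfl, hblocks⟩ := Prod.mk.inj h
  have hy : x ∆ y = x ∆ y' := by
    rw [← fOne_symmDiff_fTwo_symmDiff_fThree d x y, ← fOne_symmDiff_fTwo_symmDiff_fThree d x y']
    simpa [pathBlocks] using
      congrArg (fun σ : Fin 5 → Fin n → Bool => σ 2 ∆ σ 3 ∆ σ 4) hblocks
  simpa [pathBlocks, symmDiff_right_injective x hy] using
    And.intro (congrFun hblocks 0) (congrFun hblocks 1)

theorem card_supp_pathBlocks {d : ℕ} {q : Quad n} (hq : IsPureQuad d q) (k : Fin 5) :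
    #(supp (pathBlocks d q k)) = d := by
  have hlen : (suppList q.1 q.2.1).length = 3 * d := (length_suppList _ _).trans hq.1
  have hnodup : (suppList q.1 q.2.1).Nodup := Finset.sort_nodup _ _
  have hcard : ∀ l, l.Sublist (suppList q.1 q.2.1) → #(supp (listIndicator l)) = l.length :=
    fun l hl => card_supp_listIndicator (hnodup.sublist hl)
  fin_cases k
  · exact hq.2.1
  · exact hq.2.2.1
  · exact (hcard _ (List.take_sublist _ _)).trans (by simp [hlen]; omega)
  · exact (hcard _ ((List.take_sublist _ _).trans (List.drop_sublist _ _))).trans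
      (by simp [hlen]; omega)
  · exact (hcard _ ((List.drop_sublist _ _).trans (List.drop_sublist _ _))).trans
      (by simp [hlen]; omega)

-- The pure path walks from `x` along the blocks `t, u, f₁, f₂, f₃, t, u`.
def pathBlockIndex : Fin 7 → Fin 5 := ![0, 1, 2, 3, 4, 0, 1]

def pathOffset {V : Type*} [GeneralizedBooleanAlgebra V] (σ : Fin 5 → V) : Fin 7 → V :=
  ![⊥, σ 0, σ 0 ∆ σ 1, σ 0 ∆ σ 1 ∆ σ 2, σ 0 ∆ σ 1 ∆ σ 2 ∆ σ 3, σ 0 ∆ σ 1 ∆ σ 2 ∆ σ 3 ∆ σ 4,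
    σ 1 ∆ σ 2 ∆ σ 3 ∆ σ 4]

theorem edgesOfList_pureList (d : ℕ) (q : Quad n) :
    edgesOfList (pureList d q.1 q.2.1 q.2.2.1 q.2.2.2) = List.ofFn fun i =>
      s(q.1 ∆ pathOffset (pathBlocks d q) i,
        q.1 ∆ pathOffset (pathBlocks d q) i ∆ pathBlocks d q (pathBlockIndex i)) := by
  obtain ⟨x, y, t, u⟩ := q
  have hy := fOne_symmDiff_fTwo_symmDiff_fThree d x y
  simp only [edgesOfList, pureList, pathBlocks, pathOffset, pathBlockIndex, xorv_eq_symmDiff,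
    List.ofFn_succ]
  generalize fOne d x y = f₁, fTwo d x y = f₂, fThree d x y = f₃ at *
  rw [← symmDiff_symmDiff_cancel_left x y, ← hy]
  simp [symmDiff_left_comm, symmDiff_comm]

theorem card_filter_pure_edge_mem_le (d : ℕ) (e : Sym2 (Fin n → Bool)) :
    #{q : Quad n | IsPureQuad d q ∧ e ∈ edgesOfList (pureList d q.1 q.2.1 q.2.2.1 q.2.2.2)}
      ≤ 14 * n.choose d ^ 4 := by
  induction e using Sym2.ind with | _ a b => ?_
  set P : Finset (Quad n) := {q | IsPureQuad d q}
  set T : Finset (Fin n → Bool) := {v | #(supp v) = d}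
  have hT : ∀ q ∈ P, ∀ k, pathBlocks d q k ∈ T := fun q hq k => by
    simpa [T] using card_supp_pathBlocks (mem_filter.1 hq).2 k
  calc _ ≤ #(univ.biUnion fun i : Fin 7 => {q ∈ P | s(a, b) =
          s(q.1 ∆ pathOffset (pathBlocks d q) i,
            q.1 ∆ pathOffset (pathBlocks d q) i ∆ pathBlocks d q (pathBlockIndex i))}) := by
        refine card_le_card fun q hq => ?_
        simp only [mem_filter, mem_univ, true_and, edgesOfList_pureList, List.mem_ofFn] at hq
        obtain ⟨hpure, i, hi⟩ := hq
        exact mem_biUnion.2 ⟨i, mem_univ _, mem_filter.2 ⟨by simpa [P] using hpure, hi.symm⟩⟩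
    _ ≤ ∑ _i : Fin 7, 2 * #T ^ 4 := card_biUnion_le.trans <| sum_le_sum fun i _ =>
        card_filter_edge_at_le P Prod.fst (pathBlocks d) (injective_fst_pathBlocks d) T hT
          (pathOffset · i) (pathBlockIndex i) a b
    _ ≤ 14 * n.choose d ^ 4 := by
        have hT_card : #T ≤ n.choose d := card_filter_card_supp_eq_le d
        simp only [sum_const, card_univ, Fintype.card_fin, smul_eq_mul]
        grw [hT_card]
        omega

end

/-- Lemma 3.2: every fixed edge `e` of `Q_n^d` is contained in `O(3^{3d} · C(n,d)⁴)`
pure paths (counted as quadruples `(x,y,t,u)` giving rise to a pure path through `e`). -/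
theorem stmt_9 :
    ∃ K : ℝ, 0 < K ∧ ∀ (n d : ℕ), 1 ≤ d → ∀ e : Sym2 (Fin n → Bool),
      ((Finset.univ.filter (fun q : (Fin n → Bool) × (Fin n → Bool) × (Fin n → Bool) × (Fin n → Bool) =>
          IsPureQuad d q ∧ e ∈ edgesOfList (pureList d q.1 q.2.1 q.2.2.1 q.2.2.2))).card : ℝ)
        ≤ K * 3 ^ (3 * d) * (n.choose d) ^ 4 := by
  refine ⟨14, by norm_num, fun n d _ e => ?_⟩
  calc _ ≤ (14 * n.choose d ^ 4 : ℝ) := by exact_mod_cast card_filter_pure_edge_mem_le d e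
    _ = 14 * 1 * n.choose d ^ 4 := by ring
    _ ≤ 14 * 3 ^ (3 * d) * n.choose d ^ 4 := by gcongr; exact one_le_pow₀ (by norm_num)
end

section
/- Let ε > 0 and p ∈ (0, 1/2 − ε), and let V be the p-Bernoulli random subset of {0,1}^n. There exists α > 0 depending only on ε such that with high probability no vertex x ∈ V is α-full, i.e., every x ∈ V satisfies |S_1(x) ∩ V| < (1−α)n. -/
open MeasureTheory ProbabilityTheory ENNReal Filter

noncomputable def randomSubset (n : ℕ) (p : ℝ≥0∞) (hp : p ≤ 1) :
    Measure ((Fin n → Bool) → Bool) :=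
  Measure.pi (fun _ => (PMF.ofFintype (fun b => cond b p (1 - p))
    (by simp [Fintype.sum_bool, add_tsub_cancel_of_le hp])).toMeasure)

/-!
If some vertex has at least `k = ⌈(1 - α) n⌉` neighbours in `V`, then one of the `C(n, k)`
`k`-subsets of its Hamming sphere lies in `V`; a union bound over the `2ⁿ` centres and these
subsets bounds the failure probability by `2ⁿ C(n, k) pᵏ`. Keeping one term of the binomial
expansion, `C(n, k) qᵏ ≤ (1 + qL)ⁿ / Lᵏ`, and the choice `L = 2 / δ` with `δ = min ε (1/2)` turn
this into `((1 - δ) L^α)ⁿ`, which decays exponentially once `α` is small enough that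
`L^α < 1 / (1 - δ)`.
-/

open Finset

theorem choose_mul_pow_le_add_pow_div {q L : ℝ} (hq : 0 ≤ q) (hL : 0 < L) (n k : ℕ) :
    n.choose k * q ^ k ≤ (1 + q * L) ^ n / L ^ k := by
  rw [le_div_iff₀ (by positivity)]
  rcases lt_or_ge n k with hnk | hkn
  · simp [Nat.choose_eq_zero_of_lt hnk]
    positivity
  calc n.choose k * q ^ k * L ^ k = (q * L) ^ k * 1 ^ (n - k) * n.choose k := by ring
    _ ≤ ∑ j ∈ range (n + 1), (q * L) ^ j * 1 ^ (n - j) * n.choose j :=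
      single_le_sum (f := fun j => (q * L) ^ j * 1 ^ (n - j) * (n.choose j : ℝ))
        (fun j _ => by positivity) (mem_range.2 (Nat.lt_succ_of_le hkn))
    _ = (1 + q * L) ^ n := by rw [← add_pow, add_comm]

theorem two_pow_mul_choose_mul_pow_le {ε q α : ℝ} (hε : 0 < ε) (hq0 : 0 ≤ q)
    (hq : q ≤ 1 / 2 - ε) {n k : ℕ} (hk : (1 - α) * n ≤ k) :
    2 ^ n * n.choose k * q ^ k ≤ ((1 - ε) * (2 / ε) ^ α) ^ n := by
  set L := 2 / ε
  have hL : 1 ≤ L := by rw [le_div_iff₀ hε]; linarith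
  have hL0 : 0 < L := by positivity
  have hLk : (L / L ^ α) ^ n ≤ L ^ k := by
    calc (L / L ^ α) ^ n = L ^ ((1 - α) * n) := by
          rw [Real.rpow_mul hL0.le, Real.rpow_natCast, Real.rpow_sub hL0, Real.rpow_one]
      _ ≤ L ^ (k : ℝ) := Real.rpow_le_rpow_of_exponent_le hL hk
      _ = L ^ k := Real.rpow_natCast L k
  have hbase : 2 * (1 + q * L) / L = ε + 2 * q := by simp only [L]; field_simp
  calc 2 ^ n * n.choose k * q ^ k ≤ 2 ^ n * ((1 + q * L) ^ n / L ^ k) := by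
        rw [mul_assoc]
        gcongr
        exact choose_mul_pow_le_add_pow_div hq0 hL0 n k
    _ ≤ 2 ^ n * ((1 + q * L) ^ n / (L / L ^ α) ^ n) := by gcongr
    _ = (2 * (1 + q * L) / L * L ^ α) ^ n := by
        rw [mul_div_assoc, ← div_pow, ← mul_pow]
        congr 1
        field_simp
    _ ≤ ((1 - ε) * L ^ α) ^ n := by
        rw [hbase]
        gcongr
        linarith

theorem exists_pos_rpow_lt {b c : ℝ} (hb : 1 < b) (hc : 1 < c) :
    ∃ α : ℝ, 0 < α ∧ b ^ α < c := by
  have hlog : 0 < Real.logb b c := Real.logb_pos hb hc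
  exact ⟨Real.logb b c / 2, by positivity,
    (Real.lt_logb_iff_rpow_lt hb (by linarith)).1 (by linarith)⟩

theorem hammingDist_eq_one_iff {ι : Type*} [Fintype ι] [DecidableEq ι] {x z : ι → Bool} :
    hammingDist x z = 1 ↔ ∃ i, z = Function.update x i (!x i) := by
  rw [hammingDist, card_eq_one]
  refine exists_congr fun i => ?_
  simp only [Finset.ext_iff, mem_filter, mem_univ, true_and, mem_singleton, funext_iff]
  refine forall_congr' fun j => ?_
  rcases eq_or_ne j i with rfl | hj
  · cases x j <;> cases z j <;> simp
  · rw [Function.update_of_ne hj]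
    cases x j <;> cases z j <;> simp [hj]

theorem card_hammingDist_eq_one {ι : Type*} [Fintype ι] [DecidableEq ι] (x : ι → Bool) :
    #{z | hammingDist x z = 1} = Fintype.card ι := by
  have hinj : Function.Injective fun i => Function.update x i (!x i) := by
    intro i j h
    by_contra hij
    simpa [Function.update_of_ne hij] using congrFun h i
  have hsphere : ({z | hammingDist x z = 1} : Finset (ι → Bool))
      = univ.image fun i => Function.update x i (!x i) := by
    ext z
    simp only [mem_filter, mem_univ, true_and, mem_image, hammingDist_eq_one_iff]
    exact exists_congr fun _ => eq_comm
  rw [hsphere, card_image_of_injective _ hinj, card_univ]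

section RandomSubset

variable {n : ℕ} {p : ℝ≥0∞} {hp : p ≤ 1}

instance isProbabilityMeasure_randomSubset : IsProbabilityMeasure (randomSubset n p hp) := by
  rw [randomSubset]
  infer_instance

theorem randomSubset_forall_mem_eq_true (T : Finset (Fin n → Bool)) :
    randomSubset n p hp {ω | ∀ z ∈ T, ω z = true} = p ^ #T := by
  have hcyl : {ω : (Fin n → Bool) → Bool | ∀ z ∈ T, ω z = true}
      = Set.pi Set.univ fun z => if z ∈ T then {true} else Set.univ := by
    ext ω
    simp only [Set.mem_ofPred_eq, Set.mem_pi, Set.mem_univ, true_implies]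
    refine forall_congr' fun z => ?_
    split_ifs with h <;> simp [h]
  rw [randomSubset, hcyl, Measure.pi_pi]
  have hfactor (z : Fin n → Bool) :
      (PMF.ofFintype (fun b => cond b p (1 - p)) (by simp [add_tsub_cancel_of_le hp])).toMeasure
        (if z ∈ T then {true} else Set.univ) = if z ∈ T then p else 1 := by
    split_ifs
    · rw [PMF.toMeasure_apply_singleton _ _ (measurableSet_singleton _)]
      rfl
    · simp [add_tsub_cancel_of_le hp]
  simp_rw [hfactor]
  rw [prod_ite_mem, univ_inter, prod_const]

theorem randomSubset_le_card_filter_le (N : Finset (Fin n → Bool)) (k : ℕ) :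
    randomSubset n p hp {ω | k ≤ #{z ∈ N | ω z = true}} ≤ (#N).choose k * p ^ k := by
  calc randomSubset n p hp {ω | k ≤ #{z ∈ N | ω z = true}}
      ≤ randomSubset n p hp (⋃ T ∈ N.powersetCard k, {ω | ∀ z ∈ T, ω z = true}) := by
        refine measure_mono fun ω hω => ?_
        obtain ⟨T, hT, hTk⟩ := exists_subset_card_eq hω
        exact Set.mem_biUnion (mem_powersetCard.2 ⟨hT.trans (filter_subset _ _), hTk⟩)
          fun z hz => (mem_filter.1 (hT hz)).2
    _ ≤ ∑ T ∈ N.powersetCard k, randomSubset n p hp {ω | ∀ z ∈ T, ω z = true} :=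
        measure_biUnion_finset_le _ _
    _ = (#N).choose k * p ^ k := by
        rw [sum_congr rfl fun T hT => by
          rw [randomSubset_forall_mem_eq_true, (mem_powersetCard.1 hT).2]]
        rw [sum_const, card_powersetCard, nsmul_eq_mul]

theorem randomSubset_exists_le_card_sphere_le (k : ℕ) :
    randomSubset n p hp {ω | ∃ x, k ≤ #{z | hammingDist x z = 1 ∧ ω z = true}}
      ≤ 2 ^ n * n.choose k * p ^ k := by
  calc randomSubset n p hp {ω | ∃ x, k ≤ #{z | hammingDist x z = 1 ∧ ω z = true}}
      ≤ ∑ x : Fin n → Bool,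
          randomSubset n p hp {ω | k ≤ #{z ∈ {z | hammingDist x z = 1} | ω z = true}} := by
        rw [Set.ofPred_exists]
        simp only [filter_filter]
        exact measure_iUnion_fintype_le _ _
    _ ≤ ∑ _x : Fin n → Bool, (n.choose k * p ^ k : ℝ≥0∞) := by
        gcongr with x
        refine (randomSubset_le_card_filter_le {z | hammingDist x z = 1} k).trans_eq ?_
        rw [card_hammingDist_eq_one, Fintype.card_fin]
    _ = 2 ^ n * n.choose k * p ^ k := by
        rw [sum_const, card_univ, Fintype.card_fun, Fintype.card_bool, Fintype.card_fin,
          nsmul_eq_mul, mul_assoc]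
        push_cast
        rfl

theorem randomSubset_compl_forall_ncard_sphere_lt_le (α : ℝ) :
    randomSubset n p hp {ω | ∀ x, ω x = true →
      (Set.ncard {z | hammingDist x z = 1 ∧ ω z = true} : ℝ) < (1 - α) * n}ᶜ
      ≤ 2 ^ n * n.choose ⌈(1 - α) * n⌉₊ * p ^ ⌈(1 - α) * n⌉₊ := by
  refine (measure_mono fun ω hω => ?_).trans (randomSubset_exists_le_card_sphere_le _)
  simp only [Set.mem_compl_iff, Set.mem_ofPred_eq, not_forall, not_lt] at hω
  obtain ⟨x, -, hx⟩ := hω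
  refine ⟨x, Nat.ceil_le.2 ?_⟩
  rwa [Set.ncard_eq_toFinset_card', Set.toFinset_ofPred] at hx

end RandomSubset

/-- For `p ∈ (0, 1/2 − ε)` there exists `α > 0` (depending only on `ε`) such that with
high probability no vertex `x ∈ V` is `α`-full: every `x ∈ V` has
`|S₁(x) ∩ V| < (1−α)n`. -/
theorem stmt_17 (ε : ℝ) (hε : 0 < ε) :
    ∃ α : ℝ, 0 < α ∧ ∀ (p : ℕ → ℝ≥0∞) (hp1 : ∀ n, p n ≤ 1),
      (∀ n, 0 < (p n).toReal ∧ (p n).toReal < 1 / 2 - ε) →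
      Tendsto (fun n =>
        randomSubset n (p n) (hp1 n)
          {ω | ∀ x : Fin n → Bool, ω x = true →
            (Set.ncard {z : Fin n → Bool | hammingDist x z = 1 ∧ ω z = true} : ℝ)
              < (1 - α) * n})
        atTop (nhds 1) := by
  set δ := min ε (1 / 2)
  have hδ : 0 < δ := lt_min hε one_half_pos
  have hδ_le : δ ≤ 1 / 2 := min_le_right _ _
  obtain ⟨α, hα, hαδ⟩ := exists_pos_rpow_lt (b := 2 / δ) (c := (1 - δ)⁻¹)
    (by rw [lt_div_iff₀ hδ]; linarith) ((one_lt_inv₀ (by linarith)).2 (by linarith))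
  set r := (1 - δ) * (2 / δ) ^ α
  have hr0 : 0 ≤ r := mul_nonneg (by linarith) (by positivity)
  have hr1 : r < 1 :=
    calc r < (1 - δ) * (1 - δ)⁻¹ := mul_lt_mul_of_pos_left hαδ (by linarith)
      _ = 1 := mul_inv_cancel₀ (by linarith)
  refine ⟨α, hα, fun p hp1 hp => ?_⟩
  have hbound (n : ℕ) : randomSubset n (p n) (hp1 n) {ω | ∀ x : Fin n → Bool, ω x = true →
      (Set.ncard {z : Fin n → Bool | hammingDist x z = 1 ∧ ω z = true} : ℝ) < (1 - α) * n}ᶜ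
      ≤ ENNReal.ofReal (r ^ n) := by
    refine (randomSubset_compl_forall_ncard_sphere_lt_le α).trans ?_
    have hp_top : p n ≠ ∞ := ne_top_of_le_ne_top one_ne_top (hp1 n)
    rw [ENNReal.le_ofReal_iff_toReal_le (by finiteness) (by positivity)]
    simp only [toReal_mul, toReal_pow, toReal_natCast, toReal_ofNat]
    exact two_pow_mul_choose_mul_pow_le hδ toReal_nonneg
      (by linarith [(hp n).2, min_le_left ε (1 / 2)]) (Nat.le_ceil _)
  have hcompl := tendsto_of_tendsto_of_tendsto_of_le_of_le tendsto_const_nhds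
    (by simpa using ENNReal.tendsto_ofReal (tendsto_pow_atTop_nhds_zero_of_lt_one hr0 hr1))
    (fun _ => zero_le) hbound
  simpa only [← prob_compl_eq_one_sub MeasurableSet.of_discrete, compl_compl, tsub_zero] using
    ENNReal.Tendsto.sub tendsto_const_nhds hcompl (Or.inl one_ne_top)
end
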